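/- arXiv:2604.23690 — 8 statements merged into one kernel-verified Lean document; each statement's English description precedes it below -/
import Mathlib

section
/- Let F be a field with |F| > 2, let V be a vector space over F, let f : V → F be a function, and let x ∈ V. If f(a + λx) = f(a + x) for all a ∈ V and all nonzero λ ∈ F, then x ∈ rad(f). -/
open scoped Classical

noncomputable section

/-- The radical of a function `f : V → F`, as a linear subspace of `V`. -/
def funRadical {F V : Type*} [Field F] [AddCommGroup V] [Module F V]
    (f : V → F) : Submodule F V where
  carrier := {w | ∀ (v : V) (lam : F), f (v + lam • w) = f v}
  zero_mem' := by intro v lam; simp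
  add_mem' := by
    intro a b ha hb v lam
    have h1 : v + lam • (a + b) = (v + lam • a) + lam • b := by
      rw [smul_add]; abel
    rw [h1, hb (v + lam • a) lam, ha v lam]
  smul_mem' := by
    intro c a ha v lam
    have h1 : v + lam • (c • a) = v + (lam * c) • a := by rw [smul_smul]
    rw [h1, ha v (lam * c)]

/-- Compare `f` at `a - μ • x + μ • x = a` and at `a - μ • x + x = a + (1 - μ) • x`. -/
theorem apply_add_eq_of_forall_smul_eq {R V β : Type*} [Ring R] [AddCommGroup V] [Module R V]
    {f : V → β} {x : V} (h : ∀ (a : V) (c : R), c ≠ 0 → f (a + c • x) = f (a + x))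
    {μ : R} (hμ₀ : μ ≠ 0) (hμ₁ : μ ≠ 1) (a : V) : f (a + x) = f a := by
  have hsub : f (a - μ • x + μ • x) = f (a - μ • x + x) := h _ μ hμ₀
  have hcompl : f (a + (1 - μ) • x) = f (a + x) := h a (1 - μ) (sub_ne_zero.mpr hμ₁.symm)
  have hshift : a - μ • x + x = a + (1 - μ) • x := by rw [sub_smul, one_smul]; abel
  rw [sub_add_cancel, hshift, hcompl] at hsub
  exact hsub.symm

theorem stmt_0 {F V : Type*} [Field F] [AddCommGroup V] [Module F V]
    (hF : (2 : Cardinal) < Cardinal.mk F)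
    (f : V → F) (x : V)
    (h : ∀ (a : V) (lam : F), lam ≠ 0 → f (a + lam • x) = f (a + x)) :
    x ∈ funRadical f := by
  obtain ⟨μ, hμ₀, hμ₁⟩ :=
    Cardinal.exists_ne_ne_of_three_le
      (two_add_one_eq_three (R := Cardinal) ▸ Cardinal.add_one_le_of_lt hF) (0 : F) 1
  intro v lam
  rcases eq_or_ne lam 0 with rfl | hlam
  · rw [zero_smul, add_zero]
  · rw [h v lam hlam, apply_add_eq_of_forall_smul_eq h hμ₀ hμ₁]

end
end

section
/- Let F be a field and P ∈ F[x_1,…,x_n] with deg(P) < |F|. If v ∈ rad(P) (the radical of the polynomial function defined by P on F^n), then l(v) = 0 for every l ∈ L_P. -/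
/-! Restricted to the line `t ↦ a + t • v`, `P` becomes a univariate polynomial of degree at most
`deg P`. When `v` lies in the radical this polynomial takes the value `P a` at every `t`, so, as
`deg P < |F|`, it is constant and its coefficient of `t`, which is `∂P/∂v (a)`, vanishes. Thus `v`
is killed by every spanning functional of `L_P`. -/

open scoped Classical

noncomputable section

/-- The directional derivative of a multivariate polynomial `P` along `v` at `a`:
the coefficient of `t` in the univariate polynomial `P (a + t • v)`. -/
def dirDeriv {F : Type*} [Field F] {n : ℕ}
    (P : MvPolynomial (Fin n) F) (a v : Fin n → F) : F :=
  ((MvPolynomial.aeval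
    (fun i => Polynomial.C (a i) + Polynomial.C (v i) * Polynomial.X)) P).coeff 1

/-- The space `L_P`: the span of the functionals `v ↦ ∂P/∂v(a)` over all `a ∈ F^n`. -/
def polyLP {F : Type*} [Field F] {n : ℕ} (P : MvPolynomial (Fin n) F) :
    Submodule F ((Fin n → F) → F) :=
  Submodule.span F (Set.range fun a : Fin n → F => fun v => dirDeriv P a v)


namespace MvPolynomial

variable {F σ : Type*} [Field F]

def lineRestrict (P : MvPolynomial σ F) (a v : σ → F) : Polynomial F :=
  aeval (fun i => Polynomial.C (a i) + Polynomial.C (v i) * Polynomial.X) P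

theorem natDegree_lineRestrict_le (P : MvPolynomial σ F) (a v : σ → F) :
    (P.lineRestrict a v).natDegree ≤ P.totalDegree := by
  have hline (i : σ) : (Polynomial.C (a i) + Polynomial.C (v i) * Polynomial.X).natDegree ≤ 1 := by
    rw [add_comm]
    exact Polynomial.natDegree_linear_le
  exact (aeval_natDegree_le P le_rfl _ hline).trans_eq (mul_one _)

theorem eval_lineRestrict (P : MvPolynomial σ F) (a v : σ → F) (t : F) :
    (P.lineRestrict a v).eval t = eval (a + t • v) P := by
  rw [lineRestrict, ← Polynomial.coe_aeval_eq_eval, comp_aeval_apply, ← coe_aeval_eq_eval]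
  refine congrArg (aeval · P) ?_
  funext i
  simp only [map_add, map_mul, Polynomial.aeval_C, Polynomial.aeval_X, Pi.add_apply, Pi.smul_apply,
    smul_eq_mul, Algebra.algebraMap_self, RingHom.id_apply]
  ring

theorem lineRestrict_eq_C_of_mem_funRadical {P : MvPolynomial σ F}
    (hdeg : (P.totalDegree : Cardinal) < Cardinal.mk F) {v : σ → F}
    (hv : v ∈ funRadical fun x => eval x P) (a : σ → F) :
    P.lineRestrict a v = Polynomial.C (eval a P) := by
  rw [← sub_eq_zero]
  refine Polynomial.eq_zero_of_forall_eval_zero_of_natDegree_lt_card _ (fun t => ?_) ?_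
  · rw [Polynomial.eval_sub, eval_lineRestrict, Polynomial.eval_C, sub_eq_zero]
    exact hv a t
  · refine lt_of_le_of_lt (Nat.cast_le.mpr ?_) hdeg
    exact (Polynomial.natDegree_sub_C).trans_le (natDegree_lineRestrict_le P a v)

end MvPolynomial

theorem dirDeriv_eq_zero_of_mem_funRadical {F : Type*} [Field F] {n : ℕ}
    {P : MvPolynomial (Fin n) F} (hdeg : (P.totalDegree : Cardinal) < Cardinal.mk F)
    {v : Fin n → F} (hv : v ∈ funRadical fun x => MvPolynomial.eval x P) (a : Fin n → F) :
    dirDeriv P a v = 0 := by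
  change (P.lineRestrict a v).coeff 1 = 0
  rw [MvPolynomial.lineRestrict_eq_C_of_mem_funRadical hdeg hv a,
    Polynomial.coeff_C_of_ne_zero one_ne_zero]

theorem stmt_3 {F : Type*} [Field F] {n : ℕ}
    (P : MvPolynomial (Fin n) F)
    (hdeg : (P.totalDegree : Cardinal) < Cardinal.mk F)
    (v : Fin n → F)
    (hv : v ∈ funRadical (fun x : Fin n → F => MvPolynomial.eval x P)) :
    ∀ l ∈ polyLP P, l v = 0 := by
  have hLP : polyLP P ≤ LinearMap.ker (LinearMap.proj v : ((Fin n → F) → F) →ₗ[F] F) := by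
    rw [polyLP, Submodule.span_le]
    rintro _ ⟨a, rfl⟩
    exact dirDeriv_eq_zero_of_mem_funRadical hdeg hv a
  exact hLP

end
end

section
/- Let F be a field and P ∈ F[x_1,…,x_n] with deg(P) < |F|. Then dim(L_P) + dim(rad(P)) ≤ n. -/
open scoped Classical

noncomputable section

namespace StmtAux

open MvPolynomial Polynomial

variable {F : Type*} [Field F] {n : ℕ}

lemma eval_aeval (P : MvPolynomial (Fin n) F) (a v : Fin n → F) (t : F) :
    ((MvPolynomial.aeval
      (fun i => Polynomial.C (a i) + Polynomial.C (v i) * Polynomial.X)) P).eval t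
      = MvPolynomial.eval (a + t • v) P := by
  rw [MvPolynomial.aeval_def, ← Polynomial.coe_evalRingHom,
    MvPolynomial.eval₂_comp_left (Polynomial.evalRingHom t)]
  have h2 : (Polynomial.evalRingHom t).comp (algebraMap F F[X]) = RingHom.id F := by
    ext x
    simp only [RingHom.comp_apply, Polynomial.algebraMap_eq, Polynomial.coe_evalRingHom,
      Polynomial.eval_C, RingHom.id_apply]
  have h3 : (⇑(Polynomial.evalRingHom t) ∘
      fun i => Polynomial.C (a i) + Polynomial.C (v i) * Polynomial.X) = (a + t • v) := by
    funext i
    simp only [Function.comp_apply, Polynomial.coe_evalRingHom, Polynomial.eval_add,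
      Polynomial.eval_C, Polynomial.eval_mul, Polynomial.eval_X, Pi.add_apply,
      Pi.smul_apply, smul_eq_mul]
    ring
  rw [h2, h3]
  rfl

lemma natDegree_aeval_le (P : MvPolynomial (Fin n) F) (a v : Fin n → F) :
    ((MvPolynomial.aeval
      (fun i => Polynomial.C (a i) + Polynomial.C (v i) * Polynomial.X)) P).natDegree
      ≤ P.totalDegree := by
  rw [MvPolynomial.aeval_def, MvPolynomial.eval₂_eq]
  apply Polynomial.natDegree_sum_le_of_forall_le
  intro d hd
  refine (Polynomial.natDegree_mul_le).trans ?_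
  simp only [Polynomial.algebraMap_eq, natDegree_C, zero_add]
  refine (Polynomial.natDegree_prod_le _ _).trans ?_
  refine le_trans ?_ (MvPolynomial.le_totalDegree hd)
  rw [Finsupp.sum]
  apply Finset.sum_le_sum
  intro i _
  refine Polynomial.natDegree_pow_le.trans ?_
  have h1 : (Polynomial.C (a i) + Polynomial.C (v i) * Polynomial.X).natDegree ≤ 1 := by
    refine (Polynomial.natDegree_add_le _ _).trans ?_
    simp only [Polynomial.natDegree_C, max_le_iff]
    exact ⟨Nat.zero_le _, (Polynomial.natDegree_C_mul_le _ _).trans (by simp)⟩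
  calc d i * _ ≤ d i * 1 := Nat.mul_le_mul_left _ h1
    _ = d i := mul_one _

lemma dirDeriv_eq (P : MvPolynomial (Fin n) F) (a v : Fin n → F) :
    dirDeriv P a v = ∑ i, v i * MvPolynomial.eval a (MvPolynomial.pderiv i P) := by
  induction P using MvPolynomial.induction_on with
  | C c => simp [dirDeriv]
  | add p q hp hq =>
      simp only [dirDeriv, map_add, Polynomial.coeff_add] at *
      rw [hp, hq, ← Finset.sum_add_distrib]
      congr 1; ext i; ring
  | mul_X p i hp =>
      have h0 : ((MvPolynomial.aeval
          (fun i => Polynomial.C (a i) + Polynomial.C (v i) * Polynomial.X)) p).coeff 0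
          = MvPolynomial.eval a p := by
        rw [Polynomial.coeff_zero_eq_eval_zero, eval_aeval]
        simp
      have hr : ∀ j, MvPolynomial.eval a (MvPolynomial.pderiv j (p * MvPolynomial.X i))
          = MvPolynomial.eval a (MvPolynomial.pderiv j p) * a i
            + (if j = i then MvPolynomial.eval a p else 0) := by
        intro j
        rw [MvPolynomial.pderiv_mul, map_add, map_mul, map_mul, MvPolynomial.pderiv_X,
          MvPolynomial.eval_X, Pi.single_apply]
        rcases eq_or_ne j i with h | h
        · subst h; simp
        · rw [if_neg h, if_neg (Ne.symm h)]; simp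
      have hsum : ∑ j, v j * MvPolynomial.eval a (MvPolynomial.pderiv j (p * MvPolynomial.X i))
          = (∑ j, v j * MvPolynomial.eval a (MvPolynomial.pderiv j p)) * a i
            + v i * MvPolynomial.eval a p := by
        simp only [hr, mul_add, mul_ite, mul_zero, Finset.sum_add_distrib,
          Finset.sum_ite_eq', Finset.mem_univ, if_true, Finset.sum_mul]
        congr 1
        apply Finset.sum_congr rfl
        intro j _
        ring
      simp only [dirDeriv, map_mul, MvPolynomial.aeval_X] at *
      rw [mul_add, Polynomial.coeff_add, Polynomial.coeff_mul_C, ← mul_assoc,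
        Polynomial.coeff_mul_X, Polynomial.coeff_mul_C, h0, hp, hsum]
      ring

lemma dirDeriv_radical (P : MvPolynomial (Fin n) F)
    (hdeg : (P.totalDegree : Cardinal) < Cardinal.mk F)
    (a w : Fin n → F)
    (hw : w ∈ funRadical (fun x : Fin n → F => MvPolynomial.eval x P)) :
    dirDeriv P a w = 0 := by
  set Q := (MvPolynomial.aeval
    (fun i => Polynomial.C (a i) + Polynomial.C (w i) * Polynomial.X)) P with hQ
  have hconst : ∀ t : F, Q.eval t = MvPolynomial.eval a P := by
    intro t
    rw [hQ, eval_aeval]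
    exact hw a t
  have hz : Q - Polynomial.C (MvPolynomial.eval a P) = 0 := by
    apply Polynomial.eq_zero_of_forall_eval_zero_of_natDegree_lt_card
    · intro r; simp [hconst r]
    · refine lt_of_le_of_lt ?_ hdeg
      have hle : (Q - Polynomial.C (MvPolynomial.eval a P)).natDegree ≤ P.totalDegree := by
        refine (Polynomial.natDegree_sub_le _ _).trans ?_
        simp [natDegree_aeval_le P a w]
        exact natDegree_aeval_le P a w
      exact_mod_cast Nat.cast_le.mpr hle
  have hc : Q.coeff 1 = 0 := by
    have h := congrArg (fun q => Polynomial.coeff q 1) hz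
    simpa using h
  simpa [dirDeriv, hQ] using hc

/-- The directional derivative at `a` as a linear map in the direction. -/
def dirDerivL (P : MvPolynomial (Fin n) F) (a : Fin n → F) : (Fin n → F) →ₗ[F] F where
  toFun v := dirDeriv P a v
  map_add' v w := by
    simp only [dirDeriv_eq, Pi.add_apply, add_mul, Finset.sum_add_distrib]
  map_smul' c v := by
    simp only [dirDeriv_eq, Pi.smul_apply, smul_eq_mul, RingHom.id_apply,
      Finset.mul_sum, mul_assoc]

end StmtAux

theorem stmt_5 {F : Type*} [Field F] {n : ℕ}
    (P : MvPolynomial (Fin n) F)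
    (hdeg : (P.totalDegree : Cardinal) < Cardinal.mk F) :
    Module.rank F ↥(polyLP P)
      + Module.rank F ↥(funRadical (fun x : Fin n → F => MvPolynomial.eval x P))
      ≤ (n : Cardinal) := by
  classical
  set W := funRadical (fun x : Fin n → F => MvPolynomial.eval x P) with hW
  let e : Module.Dual F ((Fin n → F) ⧸ W) →ₗ[F] ((Fin n → F) → F) :=
    { toFun := fun φ v => φ (Submodule.Quotient.mk v)
      map_add' := fun φ ψ => rfl
      map_smul' := fun c φ => rfl }
  have he : Function.Injective e := by
    intro φ ψ h
    refine LinearMap.ext fun x => ?_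
    obtain ⟨v, rfl⟩ := Submodule.Quotient.mk_surjective W x
    exact congrFun h v
  have hsub : polyLP P ≤ LinearMap.range e := by
    rw [polyLP, Submodule.span_le]
    rintro _ ⟨a, rfl⟩
    refine ⟨W.liftQ (StmtAux.dirDerivL P a) ?_, ?_⟩
    · intro w hw
      rw [LinearMap.mem_ker]
      exact StmtAux.dirDeriv_radical P hdeg a w hw
    · rfl
  have h1 : Module.rank F ↥(polyLP P) ≤ Module.rank F ↥(LinearMap.range e) :=
    Submodule.rank_mono hsub
  have h2 : Module.rank F ↥(LinearMap.range e)
      = Module.rank F (Module.Dual F ((Fin n → F) ⧸ W)) :=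
    rank_range_of_injective e he
  have h3 : Module.rank F (Module.Dual F ((Fin n → F) ⧸ W))
      = Module.rank F ((Fin n → F) ⧸ W) := by
    rw [Module.dual_rank_eq]
    simp
  have h4 := Submodule.rank_quotient_add_rank W
  have h5 : Module.rank F (Fin n → F) = n := by
    rw [rank_fun']
    simp
  calc Module.rank F ↥(polyLP P) + Module.rank F ↥W
      ≤ Module.rank F ((Fin n → F) ⧸ W) + Module.rank F ↥W :=
        add_le_add_left ((h1.trans_eq h2).trans_eq h3) _
    _ = (n : Cardinal) := by rw [h4, h5]

end
end

section
/- Let F be a field of characteristic 0. Then for every polynomial P ∈ F[x_1,…,x_n] one has dim(rad(P)) + dim(L_P) = n. -/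
open scoped Classical

noncomputable section

/-! Restricting `P` to the line `t ↦ a + t • w` gives a univariate polynomial whose derivative
at `t` is `∂P/∂w (a + t • w)`. In characteristic zero a polynomial with zero derivative is
constant, so `w ∈ rad P` exactly when every functional `l_{P,a}` vanishes at `w`. These functionals
are linear, `∂P/∂v (a) = ∑ ∂ᵢP(a) vᵢ`, so `rad P` is the dual coannihilator of the subspace
`L_P` of the dual space, and the dimensions of a subspace of the dual of `Fⁿ` and of its
coannihilator add up to `n`. -/

open Polynomial

universe u

lemma Subspace.rank_dualCoannihilator_add_rank {K V : Type u} [Field K] [AddCommGroup V]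
    [Module K V] [FiniteDimensional K V] (W : Subspace K (Module.Dual K V)) :
    Module.rank K W.dualCoannihilator + Module.rank K W = Module.rank K V := by
  rw [← Module.finrank_eq_rank, ← Module.finrank_eq_rank, ← Module.finrank_eq_rank,
    ← Nat.cast_add, add_comm, Subspace.finrank_add_finrank_dualCoannihilator_eq]

section LineRestriction

variable {R σ : Type*} [CommRing R]

def lineRestrict (P : MvPolynomial σ R) (a v : σ → R) : R[X] :=
  MvPolynomial.aeval (fun i => C (a i) + C (v i) * X) P

lemma eval_lineRestrict (P : MvPolynomial σ R) (a v : σ → R) (t : R) :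
    (lineRestrict P a v).eval t = MvPolynomial.eval (a + t • v) P := by
  induction P using MvPolynomial.induction_on with
  | C c => simp [lineRestrict]
  | add p q hp hq => simp_all [lineRestrict]
  | mul_X p j hp =>
    simp_all only [lineRestrict, map_mul, MvPolynomial.aeval_X, eval_mul, eval_add, eval_C,
      eval_X, MvPolynomial.eval_X, Pi.add_apply, Pi.smul_apply, smul_eq_mul]
    ring

lemma taylor_lineRestrict (P : MvPolynomial σ R) (a v : σ → R) (t : R) :
    taylor t (lineRestrict P a v) = lineRestrict P (a + t • v) v := by
  induction P using MvPolynomial.induction_on with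
  | C c => simp [lineRestrict]
  | add p q hp hq => simp_all [lineRestrict]
  | mul_X p j hp =>
    simp_all only [lineRestrict, map_mul, MvPolynomial.aeval_X, taylor_mul, map_add, taylor_C,
      taylor_X, Pi.add_apply, Pi.smul_apply, smul_eq_mul]
    ring

end LineRestriction

section DirectionalDerivative

variable {F : Type*} [Field F] {n : ℕ}

lemma dirDeriv_eq_coeff_lineRestrict (P : MvPolynomial (Fin n) F) (a v : Fin n → F) :
    dirDeriv P a v = (lineRestrict P a v).coeff 1 :=
  rfl

lemma eval_derivative_lineRestrict (P : MvPolynomial (Fin n) F) (a v : Fin n → F) (t : F) :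
    (derivative (lineRestrict P a v)).eval t = dirDeriv P (a + t • v) v := by
  rw [← taylor_coeff_one, taylor_lineRestrict, dirDeriv_eq_coeff_lineRestrict]

lemma dirDeriv_eq_sum_pderiv (P : MvPolynomial (Fin n) F) (a v : Fin n → F) :
    dirDeriv P a v = ∑ i, MvPolynomial.eval a (MvPolynomial.pderiv i P) * v i := by
  simp only [dirDeriv_eq_coeff_lineRestrict]
  induction P using MvPolynomial.induction_on with
  | C c => simp [lineRestrict]
  | add p q hp hq => simp_all [lineRestrict, add_mul, Finset.sum_add_distrib]
  | mul_X p j hp =>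
    have hcoeff0 : (lineRestrict p a v).coeff 0 = MvPolynomial.eval a p := by
      simp [coeff_zero_eq_eval_zero, eval_lineRestrict]
    have hcoeff1 : (lineRestrict (p * MvPolynomial.X j) a v).coeff 1
        = (lineRestrict p a v).coeff 1 * a j + (lineRestrict p a v).coeff 0 * v j := by
      simp [lineRestrict, mul_add, ← mul_assoc, coeff_mul_X]
    simp only [hcoeff1, hcoeff0, hp, MvPolynomial.pderiv_mul, MvPolynomial.pderiv_X, map_add,
      map_mul, MvPolynomial.eval_X, Finset.sum_mul, add_mul, Finset.sum_add_distrib]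
    simp [Pi.single_apply, mul_right_comm]

end DirectionalDerivative

section Radical

variable {F : Type*} [Field F] [CharZero F] {n : ℕ}

lemma mem_funRadical_eval_iff (P : MvPolynomial (Fin n) F) (w : Fin n → F) :
    w ∈ funRadical (fun x => MvPolynomial.eval x P) ↔ ∀ a, dirDeriv P a w = 0 := by
  constructor
  · intro hw a
    have hconst : lineRestrict P a w = C (MvPolynomial.eval a P) :=
      Polynomial.funext fun t => by rw [eval_lineRestrict, eval_C]; exact hw a t
    rw [dirDeriv_eq_coeff_lineRestrict, hconst, coeff_C_of_ne_zero one_ne_zero]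
  · intro hw v lam
    have hderiv : derivative (lineRestrict P v w) = 0 :=
      Polynomial.funext fun t => by rw [eval_derivative_lineRestrict, hw, eval_zero]
    have hconst := eq_C_of_derivative_eq_zero hderiv
    have hlam := congrArg (eval lam) hconst
    have h0 := congrArg (eval 0) hconst
    rw [eval_lineRestrict, eval_C] at hlam h0
    rw [zero_smul, add_zero] at h0
    exact hlam.trans h0.symm

end Radical

section DualFunctional

variable {F : Type*} [Field F] {n : ℕ}

def dirDerivDual (P : MvPolynomial (Fin n) F) (a : Fin n → F) : Module.Dual F (Fin n → F) :=
  ∑ i, MvPolynomial.eval a (MvPolynomial.pderiv i P) • LinearMap.proj i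

lemma dirDerivDual_apply (P : MvPolynomial (Fin n) F) (a v : Fin n → F) :
    dirDerivDual P a v = dirDeriv P a v := by
  simp [dirDerivDual, dirDeriv_eq_sum_pderiv]

lemma polyLP_eq_map_span (P : MvPolynomial (Fin n) F) :
    polyLP P = (Submodule.span F (Set.range (dirDerivDual P))).map
      (LinearMap.ltoFun F (Fin n → F) F F) := by
  rw [polyLP, Submodule.map_span, ← Set.range_comp]
  congr
  funext a v
  simp [dirDerivDual_apply]

lemma rank_polyLP (P : MvPolynomial (Fin n) F) :
    Module.rank F (polyLP P) = Module.rank F (Submodule.span F (Set.range (dirDerivDual P))) := by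
  rw [polyLP_eq_map_span, rank_map_eq DFunLike.coe_injective]

lemma funRadical_eval_eq_dualCoannihilator [CharZero F] (P : MvPolynomial (Fin n) F) :
    funRadical (fun x => MvPolynomial.eval x P)
      = (Submodule.span F (Set.range (dirDerivDual P))).dualCoannihilator := by
  apply SetLike.coe_injective
  rw [Submodule.coe_dualCoannihilator_span]
  ext w
  simp [mem_funRadical_eval_iff, dirDerivDual_apply]

end DualFunctional

theorem stmt_7 {F : Type*} [Field F] [CharZero F] {n : ℕ}
    (P : MvPolynomial (Fin n) F) :
    Module.rank F ↥(funRadical (fun x : Fin n → F => MvPolynomial.eval x P))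
      + Module.rank F ↥(polyLP P) = (n : Cardinal) := by
  rw [funRadical_eval_eq_dualCoannihilator, rank_polyLP,
    Subspace.rank_dualCoannihilator_add_rank, rank_fin_fun]

end
end

section
/- Let F be a field and let P ∈ F[x_1,…,x_n] be a polynomial such that deg(P) < |F| and dim(L_P) + dim(rad(P)) = n. If φ, ψ : F^n → F^n are two maps such that P(x + λy) = P(φ(x) + λψ(y)) for all x, y ∈ F^n and λ ∈ F, then there exists a unique bijective linear map ψ_rad on F^n/rad(P) such that ψ_rad ∘ π_rad = π_rad ∘ ψ, where π_rad : F^n → F^n/rad(P) is the canonical projection. -/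
open scoped Classical

noncomputable section

/-!
Restricted to the line `t ↦ a + t • v`, `P` becomes a univariate polynomial of degree
`< |F|`, which is determined by its values. Hence the hypothesis gives
`∂P/∂y(x) = ∂P/∂(ψ y)(φ x)`, and every `w ∈ rad(P)` is killed by all the functionals
`l_{P,a}`, i.e. `rad(P) ⊆ L_P^⊥`; the dimension hypothesis turns this into an equality.
Precomposition with `ψ` maps the span of the `l_{P,φ x}`, a subspace of `L_P`, onto `L_P`,
so by finite-dimensionality it maps `L_P` onto itself. Consequently `l ∘ ψ ∈ L_P` for every
`l ∈ L_P`, which makes `ψ` linear modulo `L_P^⊥ = rad(P)`, and every `l ∈ L_P` is some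
`l' ∘ ψ`, which makes the induced map injective.
-/

theorem Submodule.map_eq_self_of_le_of_map_eq {K M : Type*} [DivisionRing K] [AddCommGroup M]
    [Module K M] {W W' : Submodule K M} [FiniteDimensional K W] (f : M →ₗ[K] M) (hle : W' ≤ W)
    (hmap : W'.map f = W) : W.map f = W := by
  have : FiniteDimensional K W' := Submodule.finiteDimensional_of_le hle
  have hrank : Module.finrank K W ≤ Module.finrank K W' :=
    hmap ▸ Submodule.finrank_map_le f W'
  obtain rfl :=
    Submodule.eq_of_le_of_finrank_eq hle (le_antisymm (Submodule.finrank_mono hle) hrank)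
  exact hmap

section DualCoannihilator

variable {F V : Type*} [Field F] [AddCommGroup V] [Module F V]

theorem Subspace.eq_dualCoannihilator_of_le_of_finrank_add_eq [FiniteDimensional F V]
    {W : Submodule F (Module.Dual F V)} {K : Submodule F V} (hle : K ≤ W.dualCoannihilator)
    (hrank : Module.finrank F W + Module.finrank F K = Module.finrank F V) :
    K = W.dualCoannihilator := by
  refine Submodule.eq_of_le_of_finrank_eq hle ?_
  have := Subspace.finrank_add_finrank_dualCoannihilator_eq W
  omega

theorem Submodule.Quotient.mk_eq_mk_iff_forall_dual {W : Submodule F (Module.Dual F V)}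
    {x y : V} :
    (Submodule.Quotient.mk x : V ⧸ W.dualCoannihilator) = Submodule.Quotient.mk y ↔
      ∀ l ∈ W, l x = l y := by
  simp [Submodule.Quotient.eq, Submodule.mem_dualCoannihilator, sub_eq_zero]

theorem Subspace.exists_linearMap_quotient_dualCoannihilator
    {W : Submodule F (Module.Dual F V)} (ψ : V → V)
    (hψ : ∀ l ∈ W, ∃ l' ∈ W, ∀ v, l (ψ v) = l' v) :
    ∃ T : (V ⧸ W.dualCoannihilator) →ₗ[F] (V ⧸ W.dualCoannihilator),
      ∀ v, T (Submodule.Quotient.mk v) = Submodule.Quotient.mk (ψ v) := by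
  let ψq : V →ₗ[F] V ⧸ W.dualCoannihilator :=
    { toFun v := Submodule.Quotient.mk (ψ v)
      map_add' y z := by
        rw [← Submodule.Quotient.mk_add, Submodule.Quotient.mk_eq_mk_iff_forall_dual]
        intro l hl
        obtain ⟨l', -, hl'⟩ := hψ l hl
        simp only [map_add, hl']
      map_smul' c y := by
        rw [RingHom.id_apply, ← Submodule.Quotient.mk_smul,
          Submodule.Quotient.mk_eq_mk_iff_forall_dual]
        intro l hl
        obtain ⟨l', -, hl'⟩ := hψ l hl
        simp only [map_smul, hl'] }
  refine ⟨W.dualCoannihilator.liftQ ψq fun y hy => ?_, fun v => rfl⟩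
  rw [LinearMap.mem_ker, ← Submodule.Quotient.mk_zero, LinearMap.coe_mk, AddHom.coe_mk,
    Submodule.Quotient.mk_eq_mk_iff_forall_dual]
  intro l hl
  obtain ⟨l', hl'W, hl'⟩ := hψ l hl
  rw [hl', map_zero]
  exact (Submodule.mem_dualCoannihilator y).mp hy l' hl'W

theorem Subspace.injective_of_quotient_dualCoannihilator {W : Submodule F (Module.Dual F V)}
    {ψ : V → V} (hψ : ∀ l ∈ W, ∃ l' ∈ W, ∀ v, l' (ψ v) = l v)
    {T : (V ⧸ W.dualCoannihilator) →ₗ[F] (V ⧸ W.dualCoannihilator)}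
    (hT : ∀ v, T (Submodule.Quotient.mk v) = Submodule.Quotient.mk (ψ v)) :
    Function.Injective T := by
  refine (injective_iff_map_eq_zero T).mpr fun u hu => ?_
  induction u using Submodule.Quotient.induction_on with | _ y
  rw [hT, ← Submodule.Quotient.mk_zero, Submodule.Quotient.mk_eq_mk_iff_forall_dual] at hu
  rw [← Submodule.Quotient.mk_zero, Submodule.Quotient.mk_eq_mk_iff_forall_dual]
  intro l hl
  obtain ⟨l', hl'W, hl'⟩ := hψ l hl
  rw [← hl', hu l' hl'W, map_zero, map_zero]

theorem Subspace.existsUnique_bijective_quotient_dualCoannihilator [FiniteDimensional F V]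
    (W : Submodule F (Module.Dual F V)) (ψ : V → V)
    (hψ : (W.map (LinearMap.ltoFun F V F F)).map (LinearMap.funLeft F F ψ) =
      W.map (LinearMap.ltoFun F V F F)) :
    ∃! T : (V ⧸ W.dualCoannihilator) →ₗ[F] (V ⧸ W.dualCoannihilator),
      Function.Bijective T ∧
        ∀ v, T (Submodule.Quotient.mk v) = Submodule.Quotient.mk (ψ v) := by
  have hcomp : ∀ l ∈ W, ∃ l' ∈ W, ∀ v, l (ψ v) = l' v := by
    intro l hl
    obtain ⟨l', hl'W, hl'⟩ := hψ.le ⟨l, ⟨l, hl, rfl⟩, rfl⟩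
    exact ⟨l', hl'W, fun v => (congrFun hl' v).symm⟩
  have hcomp' : ∀ l ∈ W, ∃ l' ∈ W, ∀ v, l' (ψ v) = l v := by
    intro l hl
    obtain ⟨_, ⟨l', hl'W, rfl⟩, hl'⟩ := hψ.ge ⟨l, hl, rfl⟩
    exact ⟨l', hl'W, congrFun hl'⟩
  obtain ⟨T, hT⟩ := exists_linearMap_quotient_dualCoannihilator ψ hcomp
  have hinj := injective_of_quotient_dualCoannihilator hcomp' hT
  refine ⟨T, ⟨⟨hinj, LinearMap.injective_iff_surjective.mp hinj⟩, hT⟩, fun T' hT' => ?_⟩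
  refine Submodule.linearMap_qext _ (LinearMap.ext fun v => ?_)
  simp [hT'.2, hT]

end DualCoannihilator

theorem Polynomial.eq_of_eval_eq_of_natDegree_le {R : Type*} [CommRing R] [IsDomain R]
    {p q : Polynomial R} {d : ℕ} (hd : (d : Cardinal) < Cardinal.mk R)
    (hp : p.natDegree ≤ d) (hq : q.natDegree ≤ d) (h : ∀ x, p.eval x = q.eval x) : p = q := by
  obtain ⟨f⟩ : Nonempty (Fin (d + 1) ↪ R) := by
    rw [← Cardinal.lift_mk_le', Cardinal.mk_fin, Cardinal.lift_uzero, Cardinal.lift_natCast,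
      Nat.cast_succ, ← Cardinal.succ_natCast]
    exact Order.succ_le_of_lt hd
  exact Polynomial.eq_of_natDegree_lt_card_of_eval_eq p q f.injective (fun i => h (f i))
    (by simp only [Fintype.card_fin]; omega)

namespace MvPolynomial

variable {F : Type*} [Field F] {n : ℕ}

def linePoly (P : MvPolynomial (Fin n) F) (a v : Fin n → F) : Polynomial F :=
  aeval (fun i => Polynomial.C (a i) + Polynomial.C (v i) * Polynomial.X) P

theorem dirDeriv_eq_coeff_linePoly (P : MvPolynomial (Fin n) F) (a v : Fin n → F) :
    dirDeriv P a v = (linePoly P a v).coeff 1 := rfl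

theorem eval_linePoly (P : MvPolynomial (Fin n) F) (a v : Fin n → F) (t : F) :
    (linePoly P a v).eval t = eval (a + t • v) P := by
  rw [linePoly, ← coe_aeval_eq_eval, ← Polynomial.coe_aeval_eq_eval, ← AlgHom.comp_apply,
    comp_aeval]
  have hline : (fun i => Polynomial.aeval t
      (Polynomial.C (a i) + Polynomial.C (v i) * Polynomial.X)) = a + t • v := by
    funext i
    simp only [map_add, map_mul, Polynomial.aeval_C, Polynomial.aeval_X,
      Algebra.algebraMap_self_apply, Pi.add_apply, Pi.smul_apply, smul_eq_mul, mul_comm]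
  rw [hline]
  rfl

theorem natDegree_linePoly_le (P : MvPolynomial (Fin n) F) (a v : Fin n → F) :
    (linePoly P a v).natDegree ≤ P.totalDegree := by
  refine (aeval_natDegree_le P le_rfl _ fun i => ?_).trans_eq (mul_one _)
  rw [add_comm]
  exact Polynomial.natDegree_linear_le

theorem dirDeriv_eq_of_eval_eq {P : MvPolynomial (Fin n) F}
    (hdeg : (P.totalDegree : Cardinal) < Cardinal.mk F) {a v b w : Fin n → F}
    (h : ∀ t : F, eval (a + t • v) P = eval (b + t • w) P) :
    dirDeriv P a v = dirDeriv P b w := by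
  rw [dirDeriv_eq_coeff_linePoly, dirDeriv_eq_coeff_linePoly,
    Polynomial.eq_of_eval_eq_of_natDegree_le hdeg (natDegree_linePoly_le P a v)
      (natDegree_linePoly_le P b w) fun t => by simp only [eval_linePoly, h]]

theorem dirDeriv_eq_sum (P : MvPolynomial (Fin n) F) (a v : Fin n → F) :
    dirDeriv P a v = ∑ i, v i * eval a (pderiv i P) := by
  simp only [dirDeriv_eq_coeff_linePoly]
  induction P using MvPolynomial.induction_on with
  | C c => simp [linePoly]
  | add p q hp hq => simp [linePoly, hp, hq, mul_add, Finset.sum_add_distrib] at *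
  | mul_X p j hp =>
    have h0 : (linePoly p a v).coeff 0 = eval a p := by
      rw [Polynomial.coeff_zero_eq_eval_zero, eval_linePoly]; simp
    have hmul : linePoly (p * X j) a v = linePoly p a v * Polynomial.C (a j)
        + linePoly p a v * Polynomial.C (v j) * Polynomial.X := by
      simp [linePoly, mul_add, mul_assoc]
    rw [hmul, Polynomial.coeff_add, Polynomial.coeff_mul_C, Polynomial.coeff_mul_X,
      Polynomial.coeff_mul_C, h0, hp]
    simp [Pi.single_apply, apply_ite, mul_add, Finset.sum_add_distrib, Finset.mul_sum, mul_comm,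
      mul_left_comm, add_comm]

def dirDerivDual (P : MvPolynomial (Fin n) F) (a : Fin n → F) : Module.Dual F (Fin n → F) where
  toFun := dirDeriv P a
  map_add' v w := by simp only [dirDeriv_eq_sum, Pi.add_apply, add_mul, Finset.sum_add_distrib]
  map_smul' c v := by simp only [dirDeriv_eq_sum, Pi.smul_apply, smul_eq_mul, mul_assoc,
    Finset.mul_sum, RingHom.id_apply]

@[simp]
theorem dirDerivDual_apply (P : MvPolynomial (Fin n) F) (a v : Fin n → F) :
    dirDerivDual P a v = dirDeriv P a v := rfl

def dualLP (P : MvPolynomial (Fin n) F) : Submodule F (Module.Dual F (Fin n → F)) :=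
  Submodule.span F (Set.range (dirDerivDual P))

theorem map_ltoFun_dualLP (P : MvPolynomial (Fin n) F) :
    (dualLP P).map (LinearMap.ltoFun F (Fin n → F) F F) = polyLP P := by
  rw [dualLP, Submodule.map_span, ← Set.range_comp]
  rfl

theorem rank_polyLP (P : MvPolynomial (Fin n) F) :
    Module.rank F (polyLP P) = Module.rank F (dualLP P) := by
  rw [← map_ltoFun_dualLP]
  exact rank_map_eq (fun f g h => LinearMap.ext (congrFun h)) _

theorem funRadical_le_dualCoannihilator {P : MvPolynomial (Fin n) F}
    (hdeg : (P.totalDegree : Cardinal) < Cardinal.mk F) :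
    funRadical (fun x => eval x P) ≤ (dualLP P).dualCoannihilator := by
  intro w hw
  rw [← SetLike.mem_coe, dualLP, Submodule.coe_dualCoannihilator_span]
  rintro _ ⟨a, rfl⟩
  have : dirDeriv P a w = dirDeriv P a 0 :=
    dirDeriv_eq_of_eval_eq hdeg fun t => by rw [smul_zero, add_zero]; exact hw a t
  rw [dirDerivDual_apply, this, ← dirDerivDual_apply, map_zero]

theorem funRadical_eq_dualCoannihilator {P : MvPolynomial (Fin n) F}
    (hdeg : (P.totalDegree : Cardinal) < Cardinal.mk F)
    (hdim : Module.rank F (polyLP P) + Module.rank F (funRadical fun x => eval x P) = n) :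
    funRadical (fun x => eval x P) = (dualLP P).dualCoannihilator := by
  refine Subspace.eq_dualCoannihilator_of_le_of_finrank_add_eq
    (funRadical_le_dualCoannihilator hdeg) ?_
  rw [rank_polyLP, ← Module.finrank_eq_rank, ← Module.finrank_eq_rank] at hdim
  rw [Module.finrank_fin_fun]
  exact_mod_cast hdim

theorem map_funLeft_polyLP {P : MvPolynomial (Fin n) F}
    (hdeg : (P.totalDegree : Cardinal) < Cardinal.mk F) {φ ψ : (Fin n → F) → Fin n → F}
    (h : ∀ x y (t : F), eval (x + t • y) P = eval (φ x + t • ψ y) P) :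
    (polyLP P).map (LinearMap.funLeft F F ψ) = polyLP P := by
  have : FiniteDimensional F (polyLP P) := map_ltoFun_dualLP P ▸ inferInstance
  refine Submodule.map_eq_self_of_le_of_map_eq _
    (Submodule.span_mono (Set.range_comp_subset_range φ (dirDeriv P))) ?_
  rw [Submodule.map_span, ← Set.range_comp]
  congr 2
  funext x v
  exact (dirDeriv_eq_of_eval_eq hdeg (h x v)).symm

end MvPolynomial

theorem stmt_9 {F : Type*} [Field F] {n : ℕ}
    (P : MvPolynomial (Fin n) F)
    (hdeg : (P.totalDegree : Cardinal) < Cardinal.mk F)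
    (hdim : Module.rank F ↥(polyLP P)
      + Module.rank F ↥(funRadical (fun x : Fin n → F => MvPolynomial.eval x P))
      = (n : Cardinal))
    (phi psi : (Fin n → F) → (Fin n → F))
    (h : ∀ (x y : Fin n → F) (lam : F),
      MvPolynomial.eval (x + lam • y) P = MvPolynomial.eval (phi x + lam • psi y) P) :
    ∃! T : ((Fin n → F) ⧸ funRadical (fun x : Fin n → F => MvPolynomial.eval x P)) →ₗ[F]
        ((Fin n → F) ⧸ funRadical (fun x : Fin n → F => MvPolynomial.eval x P)),
      Function.Bijective T ∧
        ∀ v : Fin n → F,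
          T (Submodule.Quotient.mk v) = Submodule.Quotient.mk (psi v) := by
  rw [MvPolynomial.funRadical_eq_dualCoannihilator hdeg hdim]
  refine Subspace.existsUnique_bijective_quotient_dualCoannihilator _ psi ?_
  rw [MvPolynomial.map_ltoFun_dualLP]
  exact MvPolynomial.map_funLeft_polyLP hdeg h

end
end

section
/- Let F be a field and let P ∈ F[x_1,…,x_n] be a homogeneous polynomial such that deg(P) < |F| and dim(L_P) + dim(rad(P)) = n. If φ, ψ : F^n → F^n are maps such that P(x + λy) = P(φ(x) + λψ(y)) for all x, y ∈ F^n and λ ∈ F, then there exists a unique linear map T_rad : F^n/rad(P) → F^n/rad(P) preserving P_rad (i.e., P_rad ∘ T_rad = P_rad) such that π_rad ∘ φ = π_rad ∘ ψ = T_rad ∘ π_rad. -/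
open scoped Classical

noncomputable section

namespace Stmt10Aux
open Polynomial

variable {F : Type*} [Field F] {n : ℕ}

/-- The univariate polynomial `t ↦ P (a + t v)`. -/
noncomputable def subst (Q : MvPolynomial (Fin n) F) (a v : Fin n → F) : F[X] :=
  (MvPolynomial.aeval (fun i => Polynomial.C (a i) + Polynomial.C (v i) * Polynomial.X)) Q

lemma eval_subst (Q : MvPolynomial (Fin n) F) (a v : Fin n → F) (t : F) :
    (subst Q a v).eval t = MvPolynomial.eval (a + t • v) Q := by
  unfold subst
  rw [MvPolynomial.aeval_def]
  have := MvPolynomial.eval₂_comp_left (Polynomial.evalRingHom t)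
    (algebraMap F F[X]) (fun i => Polynomial.C (a i) + Polynomial.C (v i) * Polynomial.X) Q
  simp only [coe_evalRingHom] at this
  rw [this]
  have h1 : (Polynomial.evalRingHom t).comp (algebraMap F F[X]) = RingHom.id F := by
    ext x; simp
  rw [h1]
  have h2 : ((Polynomial.eval t) ∘ fun i => Polynomial.C (a i) + Polynomial.C (v i) * Polynomial.X)
      = fun i => (a + t • v) i := by
    funext i
    simp only [Function.comp_apply, eval_add, eval_C, eval_mul, eval_X, Pi.add_apply,
      Pi.smul_apply, smul_eq_mul, mul_comm]
  rw [h2]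
  rfl

lemma subst_coeff_zero (Q : MvPolynomial (Fin n) F) (a v : Fin n → F) :
    (subst Q a v).coeff 0 = MvPolynomial.eval a Q := by
  rw [coeff_zero_eq_eval_zero, eval_subst]
  simp

lemma natDegree_linear_le (α β : F) :
    (Polynomial.C α + Polynomial.C β * Polynomial.X).natDegree ≤ 1 := by
  refine (natDegree_add_le _ _).trans ?_
  simp only [natDegree_C, max_le_iff]
  exact ⟨Nat.zero_le _, (natDegree_C_mul_le _ _).trans (by simp)⟩

lemma natDegree_subst_le (Q : MvPolynomial (Fin n) F) (a v : Fin n → F) :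
    (subst Q a v).natDegree ≤ Q.totalDegree := by
  unfold subst
  rw [MvPolynomial.aeval_def, MvPolynomial.eval₂_eq]
  apply natDegree_sum_le_of_forall_le
  intro s hs
  refine (natDegree_mul_le).trans ?_
  have h1 : (algebraMap F F[X]) (MvPolynomial.coeff s Q)
      = Polynomial.C (MvPolynomial.coeff s Q) := rfl
  rw [h1, natDegree_C, zero_add]
  refine (natDegree_prod_le _ _).trans ?_
  have h2 : ∀ i ∈ s.support,
      ((Polynomial.C (a i) + Polynomial.C (v i) * Polynomial.X) ^ s i).natDegree ≤ s i := by
    intro i _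
    refine natDegree_pow_le.trans ?_
    calc s i * (Polynomial.C (a i) + Polynomial.C (v i) * Polynomial.X).natDegree
        ≤ s i * 1 := Nat.mul_le_mul_left _ (natDegree_linear_le _ _)
      _ = s i := by ring
  refine (Finset.sum_le_sum h2).trans ?_
  exact MvPolynomial.le_totalDegree (by simpa using hs)

lemma poly_eq_of_eval_eq {P : MvPolynomial (Fin n) F}
    (hdeg : (P.totalDegree : Cardinal) < Cardinal.mk F) {q r : F[X]}
    (hq : q.natDegree ≤ P.totalDegree) (hr : r.natDegree ≤ P.totalDegree)
    (hev : ∀ t : F, q.eval t = r.eval t) : q = r := by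
  have hz : q - r = 0 := by
    apply Polynomial.eq_zero_of_forall_eval_zero_of_natDegree_lt_card
    · intro t; simp [hev t]
    · calc ((q - r).natDegree : Cardinal) ≤ (P.totalDegree : Cardinal) := by
            have := natDegree_sub_le q r
            exact_mod_cast this.trans (by omega)
        _ < Cardinal.mk F := hdeg
  exact sub_eq_zero.mp hz

lemma subst_eq_of_eval_eq {P : MvPolynomial (Fin n) F}
    (hdeg : (P.totalDegree : Cardinal) < Cardinal.mk F) {a v a' v' : Fin n → F}
    (hev : ∀ t : F, MvPolynomial.eval (a + t • v) P = MvPolynomial.eval (a' + t • v') P) :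
    subst P a v = subst P a' v' := by
  refine poly_eq_of_eval_eq hdeg (natDegree_subst_le P a v) (natDegree_subst_le P a' v') ?_
  intro t
  rw [eval_subst, eval_subst]
  exact hev t

lemma subst_coeff_one (Q : MvPolynomial (Fin n) F) (a v : Fin n → F) :
    (subst Q a v).coeff 1 = ∑ i, v i * MvPolynomial.eval a (MvPolynomial.pderiv i Q) := by
  induction Q using MvPolynomial.induction_on with
  | C c => simp [subst]
  | add p q hp hq =>
      simp only [subst, map_add, coeff_add] at *
      rw [hp, hq, ← Finset.sum_add_distrib]
      exact Finset.sum_congr rfl fun i _ => by ring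
  | mul_X p j hp =>
      have hs : subst (p * MvPolynomial.X j) a v
          = subst p a v * (Polynomial.C (a j) + Polynomial.C (v j) * Polynomial.X) := by
        simp [subst]
      rw [hs]
      have hco : (subst p a v * (Polynomial.C (a j) + Polynomial.C (v j) * Polynomial.X)).coeff 1
          = (subst p a v).coeff 1 * a j + (subst p a v).coeff 0 * v j := by
        rw [mul_add, coeff_add, ← mul_assoc]
        rw [coeff_mul_C]
        congr 1
        rw [mul_assoc, mul_comm (Polynomial.C (v j)) Polynomial.X, ← mul_assoc,
          coeff_mul_C, show (1:ℕ) = 0 + 1 from rfl, coeff_mul_X]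
      rw [hco, hp, subst_coeff_zero]
      have hd : ∀ i : Fin n, MvPolynomial.pderiv i (p * MvPolynomial.X j)
          = MvPolynomial.pderiv i p * MvPolynomial.X j
            + p * MvPolynomial.C (if i = j then 1 else 0) := by
        intro i
        rw [MvPolynomial.pderiv_mul, MvPolynomial.pderiv_X]
        congr 1
        by_cases hij : i = j <;> simp [hij, Pi.single_apply]
      simp only [hd, map_add, map_mul, MvPolynomial.eval_X, MvPolynomial.eval_C]
      rw [show ∀ G : Fin n → F, (∑ x, v x * ((MvPolynomial.eval a) ((MvPolynomial.pderiv x) p)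
            * a j + (MvPolynomial.eval a) p * G x))
          = (∑ x, v x * (MvPolynomial.eval a) ((MvPolynomial.pderiv x) p) * a j)
            + ∑ x, v x * (MvPolynomial.eval a) p * G x from fun G => by
          rw [← Finset.sum_add_distrib]; exact Finset.sum_congr rfl fun i _ => by ring]
      congr 1
      · rw [Finset.sum_mul]
      · rw [Finset.sum_eq_single j]
        · simp [mul_comm]
        · intro i _ hij; simp [hij]
        · simp

lemma reflect_one_linear (α β : F) :
    reflect 1 (Polynomial.C α + Polynomial.C β * Polynomial.X)
      = Polynomial.C β + Polynomial.C α * Polynomial.X := by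
  rw [reflect_add, reflect_C, reflect_C_mul, ← pow_one (Polynomial.X (R := F)),
    reflect_monomial, pow_one, revAt_le (by norm_num)]
  ring

lemma reflect_pow_lin (f : F[X]) (hf : f.natDegree ≤ 1) (e : ℕ) :
    reflect e (f ^ e) = (reflect 1 f) ^ e := by
  induction e with
  | zero => simp [reflect_one]
  | succ e ih =>
      have hb : (f ^ e).natDegree ≤ e := natDegree_pow_le.trans (by
        calc e * f.natDegree ≤ e * 1 := Nat.mul_le_mul_left _ hf
          _ = e := by ring)
      rw [pow_succ, add_comm e 1, show (1 : ℕ) + e = 1 + e from rfl, mul_comm,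
        reflect_mul f (f ^ e) hf hb, ih, pow_add, pow_one]

lemma reflect_prod_lin {ι : Type*} (t : Finset ι) (e : ι → ℕ) (f : ι → F[X])
    (hf : ∀ i, (f i).natDegree ≤ 1) :
    reflect (∑ i ∈ t, e i) (∏ i ∈ t, f i ^ e i) = ∏ i ∈ t, (reflect 1 (f i)) ^ e i := by
  classical
  induction t using Finset.cons_induction with
  | empty => simp [reflect_one]
  | cons a s ha ih =>
      rw [Finset.sum_cons, Finset.prod_cons, Finset.prod_cons]
      have h1 : (f a ^ e a).natDegree ≤ e a := natDegree_pow_le.trans (by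
        calc e a * (f a).natDegree ≤ e a * 1 := Nat.mul_le_mul_left _ (hf a)
          _ = e a := by ring)
      have h2 : (∏ i ∈ s, f i ^ e i).natDegree ≤ ∑ i ∈ s, e i := by
        refine (natDegree_prod_le _ _).trans (Finset.sum_le_sum fun i _ => ?_)
        exact natDegree_pow_le.trans (by
          calc e i * (f i).natDegree ≤ e i * 1 := Nat.mul_le_mul_left _ (hf i)
            _ = e i := by ring)
      rw [reflect_mul _ _ h1 h2, reflect_pow_lin _ (hf a), ih]

lemma reflect_finset_sum {ι : Type*} (t : Finset ι) (f : ι → F[X]) (N : ℕ) :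
    reflect N (∑ i ∈ t, f i) = ∑ i ∈ t, reflect N (f i) := by
  classical
  induction t using Finset.cons_induction with
  | empty => simp [reflect_zero]
  | cons a s ha ih => rw [Finset.sum_cons, Finset.sum_cons, reflect_add, ih]

lemma reflect_subst {P : MvPolynomial (Fin n) F} {d : ℕ} (hhom : P.IsHomogeneous d)
    (a v : Fin n → F) : reflect d (subst P a v) = subst P v a := by
  classical
  unfold subst
  rw [MvPolynomial.aeval_def, MvPolynomial.aeval_def, MvPolynomial.eval₂_eq,
    MvPolynomial.eval₂_eq, reflect_finset_sum]
  apply Finset.sum_congr rfl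
  intro s hs
  have hd : ∑ i ∈ s.support, s i = d := by
    by_contra hne
    exact (MvPolynomial.mem_support_iff.mp hs)
      (hhom.coeff_eq_zero (by simpa [Finsupp.degree_apply] using hne))
  have halg : (algebraMap F F[X]) (MvPolynomial.coeff s P)
      = Polynomial.C (MvPolynomial.coeff s P) := rfl
  rw [halg, ← hd]
  have hb : (∏ i ∈ s.support,
      (Polynomial.C (a i) + Polynomial.C (v i) * Polynomial.X) ^ s i).natDegree
      ≤ ∑ i ∈ s.support, s i := by
    refine (natDegree_prod_le _ _).trans (Finset.sum_le_sum fun i _ => ?_)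
    exact natDegree_pow_le.trans (by
      calc s i * (Polynomial.C (a i) + Polynomial.C (v i) * Polynomial.X).natDegree
          ≤ s i * 1 := Nat.mul_le_mul_left _ (natDegree_linear_le _ _)
        _ = s i := by ring)
  rw [show (∑ i ∈ s.support, s i) = 0 + ∑ i ∈ s.support, s i from (zero_add _).symm,
    reflect_mul _ _ ((natDegree_C _).le) hb,
    reflect_prod_lin _ _ _ (fun i => natDegree_linear_le (a i) (v i)), reflect_C]
  simp only [pow_zero, mul_one]
  congr 1
  apply Finset.prod_congr rfl
  intro i _
  rw [reflect_one_linear]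

/-- The directional derivative at `a`, as a bundled linear functional in the direction. -/
noncomputable def Lfun (P : MvPolynomial (Fin n) F) (a : Fin n → F) :
    Module.Dual F (Fin n → F) :=
  ∑ i, (MvPolynomial.eval a (MvPolynomial.pderiv i P)) • LinearMap.proj i

lemma Lfun_apply (P : MvPolynomial (Fin n) F) (a v : Fin n → F) :
    Lfun P a v = (subst P a v).coeff 1 := by
  rw [subst_coeff_one]
  simp only [Lfun, LinearMap.sum_apply, LinearMap.smul_apply, LinearMap.proj_apply,
    smul_eq_mul]
  exact Finset.sum_congr rfl fun i _ => by ring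

lemma dirDeriv_eq_Lfun (P : MvPolynomial (Fin n) F) (a : Fin n → F) :
    (fun v => dirDeriv P a v) = ⇑(Lfun P a) := by
  funext v
  rw [Lfun_apply]
  rfl

/-- Coercion of a dual vector to a plain function, as a linear map. -/
noncomputable def coeLM : Module.Dual F (Fin n → F) →ₗ[F] ((Fin n → F) → F) where
  toFun L := ⇑L
  map_add' _ _ := rfl
  map_smul' _ _ := rfl

lemma coeLM_injective : Function.Injective (coeLM (F := F) (n := n)) :=
  fun _ _ h => DFunLike.coe_injective h

end Stmt10Aux
open Stmt10Aux Polynomial in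
theorem stmt_10 {F : Type*} [Field F] {n : ℕ}
    (P : MvPolynomial (Fin n) F) (d : ℕ) (hhom : P.IsHomogeneous d)
    (hdeg : (P.totalDegree : Cardinal) < Cardinal.mk F)
    (hdim : Module.rank F ↥(polyLP P)
      + Module.rank F ↥(funRadical (fun x : Fin n → F => MvPolynomial.eval x P))
      = (n : Cardinal))
    (phi psi : (Fin n → F) → (Fin n → F))
    (h : ∀ (x y : Fin n → F) (lam : F),
      MvPolynomial.eval (x + lam • y) P = MvPolynomial.eval (phi x + lam • psi y) P)
    (Prad : ((Fin n → F) ⧸ funRadical (fun x : Fin n → F => MvPolynomial.eval x P)) → F)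
    (hPrad : ∀ v : Fin n → F,
      MvPolynomial.eval v P = Prad (Submodule.Quotient.mk v)) :
    ∃! T : ((Fin n → F) ⧸ funRadical (fun x : Fin n → F => MvPolynomial.eval x P)) →ₗ[F]
        ((Fin n → F) ⧸ funRadical (fun x : Fin n → F => MvPolynomial.eval x P)),
      (∀ z, Prad (T z) = Prad z) ∧
      (∀ v : Fin n → F,
        Submodule.Quotient.mk (phi v) = T (Submodule.Quotient.mk v)) ∧
      (∀ v : Fin n → F,
        Submodule.Quotient.mk (psi v) = T (Submodule.Quotient.mk v)) := by
  classical
  set rad : Submodule F (Fin n → F) :=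
    funRadical (fun x : Fin n → F => MvPolynomial.eval x P) with hraddef
  have hradmem : ∀ w : Fin n → F, w ∈ rad ↔ ∀ (v : Fin n → F) (lam : F),
      MvPolynomial.eval (v + lam • w) P = MvPolynomial.eval v P := fun w => Iff.rfl
  set LP' : Submodule F (Module.Dual F (Fin n → F)) :=
    Submodule.span F (Set.range fun a : Fin n → F => Lfun P a) with hLPdef
  -- polyLP is the image of LP' under the coercion to functions
  have hpolyLP : polyLP P = LP'.map coeLM := by
    have hfun : (fun a : Fin n → F => fun v => dirDeriv P a v)
        = (⇑(coeLM (F := F) (n := n)) ∘ fun a => Lfun P a) := by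
      funext a
      exact dirDeriv_eq_Lfun P a
    rw [polyLP, hLPdef, Submodule.map_span, ← Set.range_comp, hfun]
  have hrkmap : Module.rank F ↥(LP'.map coeLM) = Module.rank F ↥LP' := by
    have e : ↥LP' ≃ₗ[F] ↥(LP'.map coeLM) :=
      Submodule.equivMapOfInjective coeLM coeLM_injective LP'
    exact @LinearEquiv.rank_eq F ↥(LP'.map coeLM) ↥LP' _ _ _ _ _ e.symm
  have hrankLP : Module.rank F ↥(polyLP P) = (Module.finrank F ↥LP' : Cardinal) := by
    rw [hpolyLP, hrkmap, Module.finrank_eq_rank]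
  have hfr : Module.finrank F ↥LP' + Module.finrank F ↥rad = n := by
    have hdim' := hdim
    rw [hrankLP, ← Module.finrank_eq_rank F ↥rad] at hdim'
    exact_mod_cast hdim'
  -- the coannihilator criterion
  have hco : ∀ (g : (Fin n → F) → Module.Dual F (Fin n → F)) (w : Fin n → F),
      w ∈ (Submodule.span F (Set.range g)).dualCoannihilator ↔ ∀ a, g a w = 0 := by
    intro g w
    have hs := Submodule.coe_dualCoannihilator_span (Set.range g)
    constructor
    · intro hw a
      rw [← SetLike.mem_coe, hs] at hw
      exact hw _ ⟨a, rfl⟩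
    · intro hw
      rw [← SetLike.mem_coe, hs]
      rintro f ⟨a, rfl⟩
      exact hw a
  have hsubst_rad : ∀ w ∈ rad, ∀ a, subst P a w = Polynomial.C (MvPolynomial.eval a P) := by
    intro w hw a
    apply poly_eq_of_eval_eq hdeg (natDegree_subst_le P a w) (by simp)
    intro t
    rw [eval_subst]
    rw [Polynomial.eval_C]
    exact ((hradmem w).mp hw) a t
  have hradK : rad ≤ LP'.dualCoannihilator := by
    intro w hw
    rw [hLPdef, hco]
    intro a
    rw [Lfun_apply, hsubst_rad w hw a]
    simp
  have hfinK : Module.finrank F ↥LP'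
      + Module.finrank F ↥(LP'.dualCoannihilator) = n := by
    have := Subspace.finrank_add_finrank_dualCoannihilator_eq LP'
    rwa [Module.finrank_pi, Fintype.card_fin] at this
  have hradeqK : rad = LP'.dualCoannihilator :=
    Submodule.eq_of_le_of_finrank_le hradK (by omega)
  have hmemrad : ∀ w : Fin n → F, w ∈ rad ↔ ∀ a, Lfun P a w = 0 := by
    intro w
    rw [hradeqK, hLPdef]
    exact hco _ w
  -- the two fundamental polynomial identities
  have I1 : ∀ x y, subst P x y = subst P (phi x) (psi y) := fun x y =>
    subst_eq_of_eval_eq hdeg (fun t => h x y t)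
  have I2 : ∀ x y, subst P y x = subst P (psi y) (phi x) := by
    intro x y
    rw [← reflect_subst hhom x y, I1 x y, reflect_subst hhom]
  have hA : ∀ x y, Lfun P (phi x) (psi y) = Lfun P x y := by
    intro x y
    rw [Lfun_apply, Lfun_apply, ← I1]
  have hB : ∀ x y, Lfun P (psi y) (phi x) = Lfun P y x := by
    intro x y
    rw [Lfun_apply, Lfun_apply, ← I2]
  have hPphi : ∀ x, MvPolynomial.eval (phi x) P = MvPolynomial.eval x P := by
    intro x
    have := congrArg (fun q => Polynomial.coeff q 0) (I1 x 0)
    simpa only [subst_coeff_zero] using this.symm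
  have hPpsi : ∀ y, MvPolynomial.eval (psi y) P = MvPolynomial.eval y P := by
    intro y
    have := congrArg (fun q => Polynomial.coeff q 0) (I2 0 y)
    simpa only [subst_coeff_zero] using this.symm
  -- the span of the functionals at points in the range of psi (resp. phi) is all of LP'
  have hspan : ∀ (chi om : (Fin n → F) → (Fin n → F)),
      (∀ x y, Lfun P (om y) (chi x) = Lfun P y x) →
      Submodule.span F (Set.range fun y => Lfun P (om y)) = LP' := by
    intro chi om hrel
    set W : Submodule F (Module.Dual F (Fin n → F)) :=
      Submodule.span F (Set.range fun y => Lfun P (om y)) with hWdef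
    have hWle : W ≤ LP' := by
      rw [hWdef, hLPdef]
      apply Submodule.span_mono
      rintro _ ⟨y, rfl⟩
      exact ⟨om y, rfl⟩
    set R : Module.Dual F (Fin n → F) →ₗ[F] ((Fin n → F) → F) :=
      (LinearMap.funLeft F F chi).comp coeLM with hRdef
    have hRgen : ∀ y, R (Lfun P (om y)) = coeLM (Lfun P y) := by
      intro y
      funext x
      show (Lfun P (om y)) (chi x) = (Lfun P y) x
      exact hrel x y
    have hle : LP'.map coeLM ≤ W.map R := by
      rw [hLPdef, Submodule.map_span, Submodule.span_le]
      rintro _ ⟨_, ⟨y, rfl⟩, rfl⟩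
      exact ⟨Lfun P (om y), Submodule.subset_span ⟨y, rfl⟩, hRgen y⟩
    have hrankle : Module.finrank F ↥LP' ≤ Module.finrank F ↥W := by
      have c1 : Module.rank F ↥(LP'.map coeLM) ≤ Module.rank F ↥(W.map R) :=
        Submodule.rank_mono hle
      have c2 : Module.rank F ↥(W.map R) ≤ Module.rank F ↥W := rank_map_le R W
      have c0 : Module.rank F ↥(LP'.map coeLM) = (Module.finrank F ↥LP' : Cardinal) := by
        rw [hrkmap, Module.finrank_eq_rank]
      rw [c0] at c1
      have := c1.trans c2
      rw [← Module.finrank_eq_rank F ↥W] at this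
      exact_mod_cast this
    exact Submodule.eq_of_le_of_finrank_le hWle hrankle
  have hCpsi : ∀ x y, Lfun P (psi y) (phi x) = Lfun P y x := hB
  have hCphi : ∀ x y, Lfun P (phi y) (psi x) = Lfun P y x := fun x y => hA y x
  have hWpsi := hspan phi psi hCpsi
  have hWphi := hspan psi phi hCphi
  have hmemrad_psi : ∀ w : Fin n → F, w ∈ rad ↔ ∀ y, Lfun P (psi y) w = 0 := by
    intro w
    rw [hradeqK, ← hWpsi]
    exact hco _ w
  have hmemrad_phi : ∀ w : Fin n → F, w ∈ rad ↔ ∀ y, Lfun P (phi y) w = 0 := by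
    intro w
    rw [hradeqK, ← hWphi]
    exact hco _ w
  -- phi and psi are additive and homogeneous modulo the radical
  have hphi_add : ∀ x x', phi (x + x') - phi x - phi x' ∈ rad := by
    intro x x'
    rw [hmemrad_psi]
    intro y
    rw [map_sub, map_sub, hB (x + x') y, hB x y, hB x' y, map_add]
    ring
  have hphi_smul : ∀ (c : F) (x), phi (c • x) - c • phi x ∈ rad := by
    intro c x
    rw [hmemrad_psi]
    intro y
    rw [map_sub, map_smul, hB (c • x) y, hB x y, map_smul]
    simp [smul_eq_mul]
  have hpsi_add : ∀ x x', psi (x + x') - psi x - psi x' ∈ rad := by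
    intro x x'
    rw [hmemrad_phi]
    intro y
    rw [map_sub, map_sub, hA y (x + x'), hA y x, hA y x', map_add]
    ring
  have hpsi_smul : ∀ (c : F) (x), psi (c • x) - c • psi x ∈ rad := by
    intro c x
    rw [hmemrad_phi]
    intro y
    rw [map_sub, map_smul, hA y (c • x), hA y x, map_smul]
    simp [smul_eq_mul]
  have hrad_transl : ∀ (u r : Fin n → F), r ∈ rad →
      MvPolynomial.eval (u + r) P = MvPolynomial.eval u P := by
    intro u r hr
    have := ((hradmem r).mp hr) u 1
    simpa using this
  -- chain rule for psi
  have hC2 : ∀ x y, Lfun P (psi x) (psi y) = Lfun P x y := by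
    intro x y
    have hs : subst P (psi x) (psi y) = subst P x y := by
      apply subst_eq_of_eval_eq hdeg
      intro t
      have h1 : psi (x + t • y) - psi x - psi (t • y) ∈ rad := hpsi_add x (t • y)
      have h2 : psi (t • y) - t • psi y ∈ rad := hpsi_smul t y
      have key := hrad_transl (psi x + t • psi y) _ (Submodule.add_mem rad h1 h2)
      rw [show psi x + t • psi y
          + (psi (x + t • y) - psi x - psi (t • y) + (psi (t • y) - t • psi y))
          = psi (x + t • y) from by abel] at key
      rw [← key, hPpsi]
    rw [Lfun_apply, Lfun_apply, hs]
  -- phi and psi agree modulo the radical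
  have hphieqpsi : ∀ v, phi v - psi v ∈ rad := by
    intro v
    rw [hmemrad_psi]
    intro y
    rw [map_sub, hB v y, hC2 y v]
    ring
  have hphirad : ∀ w ∈ rad, phi w ∈ rad := by
    intro w hw
    rw [hmemrad_psi]
    intro y
    rw [hB w y]
    exact (hmemrad w).mp hw y
  -- the induced linear map on the quotient
  set Amap : (Fin n → F) →ₗ[F] ((Fin n → F) ⧸ rad) :=
    { toFun := fun v => Submodule.Quotient.mk (phi v),
      map_add' := by
        intro x y
        rw [← Submodule.Quotient.mk_add, Submodule.Quotient.eq]
        simpa [sub_sub] using hphi_add x y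
      map_smul' := by
        intro c x
        simp only [RingHom.id_apply]
        rw [← Submodule.Quotient.mk_smul, Submodule.Quotient.eq]
        exact hphi_smul c x } with hAmapdef
  have hker : rad ≤ LinearMap.ker Amap := by
    intro w hw
    rw [LinearMap.mem_ker]
    show Submodule.Quotient.mk (phi w) = 0
    rw [Submodule.Quotient.mk_eq_zero]
    exact hphirad w hw
  refine ⟨rad.liftQ Amap hker, ⟨?_, ?_, ?_⟩, ?_⟩
  · intro z
    obtain ⟨v, rfl⟩ := Submodule.Quotient.mk_surjective rad z
    rw [Submodule.liftQ_apply, hAmapdef]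
    simp only [LinearMap.coe_mk, AddHom.coe_mk]
    rw [← hPrad (phi v), ← hPrad v]
    exact hPphi v
  · intro v
    rw [Submodule.liftQ_apply]
    rfl
  · intro v
    rw [Submodule.liftQ_apply]
    show Submodule.Quotient.mk (psi v) = Submodule.Quotient.mk (phi v)
    rw [Submodule.Quotient.eq]
    simpa [neg_sub] using rad.neg_mem (hphieqpsi v)
  · rintro T' ⟨-, hT2, -⟩
    apply LinearMap.ext
    intro z
    obtain ⟨v, rfl⟩ := Submodule.Quotient.mk_surjective rad z
    rw [← hT2 v, Submodule.liftQ_apply]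
    rfl
end
end

section
/- Let F be a field of characteristic 0 and let P ∈ F[x_1,…,x_n] be a homogeneous polynomial. If φ, ψ : F^n → F^n are maps such that P(x + λy) = P(φ(x) + λψ(y)) for all x, y ∈ F^n and λ ∈ F, then there exists a unique linear map T_rad : F^n/rad(P) → F^n/rad(P) preserving P_rad (i.e., P_rad ∘ T_rad = P_rad) such that π_rad ∘ φ = π_rad ∘ ψ = T_rad ∘ π_rad. -/
open scoped Classical

noncomputable section

namespace Stmt11Aux

variable {F : Type*} [Field F] {n : ℕ}

lemma mem_funRadical {V : Type*} [AddCommGroup V] [Module F V] (f : V → F) (w : V) :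
    w ∈ funRadical f ↔ ∀ (v : V) (lam : F), f (v + lam • w) = f v := Iff.rfl

/-- restriction of `P` to the line `a + t • b`, as a polynomial in `t`. -/
noncomputable def lineP (P : MvPolynomial (Fin n) F) (a b : Fin n → F) : Polynomial F :=
  MvPolynomial.eval₂ Polynomial.C
    (fun i => Polynomial.C (a i) + Polynomial.X * Polynomial.C (b i)) P

lemma lineP_add (p q : MvPolynomial (Fin n) F) (a b : Fin n → F) :
    lineP (p + q) a b = lineP p a b + lineP q a b := MvPolynomial.eval₂_add _ _

lemma lineP_mul (p q : MvPolynomial (Fin n) F) (a b : Fin n → F) :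
    lineP (p * q) a b = lineP p a b * lineP q a b := MvPolynomial.eval₂_mul _ _

lemma lineP_C (c : F) (a b : Fin n → F) :
    lineP (MvPolynomial.C c) a b = Polynomial.C c := MvPolynomial.eval₂_C _ _ _

lemma lineP_X (j : Fin n) (a b : Fin n → F) :
    lineP (MvPolynomial.X j) a b
      = Polynomial.C (a j) + Polynomial.X * Polynomial.C (b j) := MvPolynomial.eval₂_X _ _ _

lemma lineP_zero (a b : Fin n → F) : lineP (0 : MvPolynomial (Fin n) F) a b = 0 :=
  MvPolynomial.eval₂_zero _ _

lemma lineP_one (a b : Fin n → F) : lineP (1 : MvPolynomial (Fin n) F) a b = 1 :=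
  MvPolynomial.eval₂_one _ _

lemma eval_lineP (P : MvPolynomial (Fin n) F) (a b : Fin n → F) (t : F) :
    (lineP P a b).eval t = MvPolynomial.eval (a + t • b) P := by
  induction P using MvPolynomial.induction_on with
  | C c => simp [lineP_C]
  | add p q hp hq => rw [lineP_add, Polynomial.eval_add, hp, hq, map_add]
  | mul_X p j hp =>
      rw [lineP_mul, lineP_X, Polynomial.eval_mul, hp, map_mul]
      simp only [Polynomial.eval_add, Polynomial.eval_C, Polynomial.eval_mul, Polynomial.eval_X,
        MvPolynomial.eval_X, Pi.add_apply, Pi.smul_apply, smul_eq_mul]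

/-- the "first polarization" `∑ i, b i * ∂ᵢP(a)`. -/
noncomputable def Dop (P : MvPolynomial (Fin n) F) (a b : Fin n → F) : F :=
  ∑ i, b i * MvPolynomial.eval a (MvPolynomial.pderiv i P)

lemma Dop_zero (P : MvPolynomial (Fin n) F) (a : Fin n → F) : Dop P a 0 = 0 := by
  simp [Dop]

lemma Dop_add (P : MvPolynomial (Fin n) F) (a b c : Fin n → F) :
    Dop P a (b + c) = Dop P a b + Dop P a c := by
  simp [Dop, add_mul, Finset.sum_add_distrib]

lemma Dop_smul (P : MvPolynomial (Fin n) F) (a b : Fin n → F) (r : F) :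
    Dop P a (r • b) = r * Dop P a b := by
  simp [Dop, Finset.mul_sum, mul_assoc]

lemma Dop_sub (P : MvPolynomial (Fin n) F) (a b c : Fin n → F) :
    Dop P a (b - c) = Dop P a b - Dop P a c := by
  simp [Dop, sub_mul, Finset.sum_sub_distrib]

lemma derivative_lineP (P : MvPolynomial (Fin n) F) (a b : Fin n → F) :
    (lineP P a b).derivative = ∑ i, Polynomial.C (b i) * lineP (MvPolynomial.pderiv i P) a b := by
  induction P using MvPolynomial.induction_on with
  | C c =>
      simp [lineP_C, MvPolynomial.pderiv_C, lineP_zero]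
  | add p q hp hq =>
      rw [lineP_add, Polynomial.derivative_add, hp, hq, ← Finset.sum_add_distrib]
      apply Finset.sum_congr rfl
      intro i _
      rw [map_add, lineP_add]
      ring
  | mul_X p j hp =>
      rw [lineP_mul, lineP_X, Polynomial.derivative_mul, hp]
      have h2 : Polynomial.derivative
          (Polynomial.C (a j) + Polynomial.X * Polynomial.C (b j)) = Polynomial.C (b j) := by
        simp
      rw [h2]
      have key : ∀ i : Fin n,
          Polynomial.C (b i) * lineP (MvPolynomial.pderiv i (p * MvPolynomial.X j)) a b
          = Polynomial.C (b i) * lineP (MvPolynomial.pderiv i p) a b *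
              (Polynomial.C (a j) + Polynomial.X * Polynomial.C (b j))
            + (if i = j then Polynomial.C (b i) * lineP p a b else 0) := by
        intro i
        rw [MvPolynomial.pderiv_mul, lineP_add, lineP_mul, lineP_mul, lineP_X,
          MvPolynomial.pderiv_X]
        by_cases hij : i = j
        · subst hij
          simp only [Pi.single_eq_same, lineP_one, eq_self_iff_true, if_true]
          ring
        · simp only [Pi.single_eq_of_ne (by exact fun hji => hij hji.symm : j ≠ i), lineP_zero,
            if_neg hij]
          ring
      rw [Finset.sum_congr rfl (fun i _ => key i), Finset.sum_add_distrib,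
        Finset.sum_ite_eq' Finset.univ j
          (fun i => Polynomial.C (b i) * lineP p a b)]
      simp only [Finset.mem_univ, if_pos, Finset.sum_mul]
      ring

lemma eval_derivative_lineP (P : MvPolynomial (Fin n) F) (a b : Fin n → F) (t : F) :
    Polynomial.eval t (Polynomial.derivative (lineP P a b)) = Dop P (a + t • b) b := by
  rw [derivative_lineP, Polynomial.eval_finset_sum]
  apply Finset.sum_congr rfl
  intro i _
  rw [Polynomial.eval_mul, Polynomial.eval_C, eval_lineP]

variable [CharZero F]

lemma Dop_congr {P : MvPolynomial (Fin n) F} {a b c e : Fin n → F}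
    (h : ∀ t : F, MvPolynomial.eval (a + t • b) P = MvPolynomial.eval (c + t • e) P) :
    Dop P a b = Dop P c e := by
  have hline : lineP P a b = lineP P c e :=
    Polynomial.funext fun t => by rw [eval_lineP, eval_lineP, h]
  have e1 : Polynomial.eval 0 (Polynomial.derivative (lineP P a b)) = Dop P a b := by
    rw [eval_derivative_lineP]
    congr 1
    simp
  have e2 : Polynomial.eval 0 (Polynomial.derivative (lineP P c e)) = Dop P c e := by
    rw [eval_derivative_lineP]
    congr 1
    simp
  rw [← e1, ← e2, hline]

lemma mem_funRadical_iff_Dop (P : MvPolynomial (Fin n) F) (w : Fin n → F) :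
    w ∈ funRadical (fun x : Fin n → F => MvPolynomial.eval x P) ↔ ∀ v, Dop P v w = 0 := by
  constructor
  · intro hw v
    have h0 : Dop P v w = Dop P v 0 := by
      apply Dop_congr
      intro t
      have hh : MvPolynomial.eval (v + t • w) P = MvPolynomial.eval v P := hw v t
      rw [hh]
      congr 1
      simp
    rw [h0, Dop_zero]
  · intro hD v lam
    have hder : Polynomial.derivative (lineP P v w) = 0 := by
      apply Polynomial.funext
      intro t
      rw [eval_derivative_lineP, hD]
      simp
    have hC := Polynomial.eq_C_of_natDegree_eq_zero
      (Polynomial.natDegree_eq_zero_of_derivative_eq_zero hder)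
    have hl : MvPolynomial.eval (v + lam • w) P = (lineP P v w).coeff 0 := by
      rw [← eval_lineP, hC]; simp
    have h0 : MvPolynomial.eval v P = (lineP P v w).coeff 0 := by
      have h00 := eval_lineP P v w 0
      rw [hC] at h00
      simp only [Polynomial.eval_C] at h00
      rw [show v + (0:F) • w = v by simp] at h00
      exact h00.symm
    show MvPolynomial.eval (v + lam • w) P = MvPolynomial.eval v P
    rw [hl, h0]

lemma eval_smul_of_isHomogeneous {d : ℕ} (P : MvPolynomial (Fin n) F) (hhom : P.IsHomogeneous d)
    (c : F) (v : Fin n → F) :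
    MvPolynomial.eval (c • v) P = c ^ d * MvPolynomial.eval v P := by
  rw [MvPolynomial.eval_eq, MvPolynomial.eval_eq, Finset.mul_sum]
  apply Finset.sum_congr rfl
  intro u hu
  have hd : ∑ i ∈ u.support, u i = d := by
    have h1 : Finsupp.weight (1 : Fin n → ℕ) u = d :=
      hhom (MvPolynomial.mem_support_iff.mp hu)
    have h2 : Finsupp.degree u = d := by rw [Finsupp.degree_eq_weight_one]; exact h1
    exact h2
  have : ∏ i ∈ u.support, (c • v) i ^ u i
      = c ^ d * ∏ i ∈ u.support, v i ^ u i := by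
    have : ∀ i ∈ u.support, (c • v) i ^ u i = c ^ u i * v i ^ u i := by
      intro i _
      rw [Pi.smul_apply, smul_eq_mul, mul_pow]
    rw [Finset.prod_congr rfl this, Finset.prod_mul_distrib,
      Finset.prod_pow_eq_pow_sum, hd]
  rw [this]
  ring

/-- The key "span" lemma: if `Dop P x y = Dop P (α x) (β y)` for all `x y`, then any `w`
orthogonal to all gradients at points `α x` is orthogonal to all gradients. -/
lemma key_span (P : MvPolynomial (Fin n) F) (α β : (Fin n → F) → (Fin n → F))
    (hid : ∀ x y, Dop P x y = Dop P (α x) (β y))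
    (w : Fin n → F) (hw : ∀ x, Dop P (α x) w = 0) (v : Fin n → F) : Dop P v w = 0 := by
  set s : (Fin n → F) → ((Fin n → F) → F) := fun v y => Dop P v y with hs
  set S0 : Submodule F ((Fin n → F) → F) := Submodule.span F (Set.range s) with hS0
  set S : Submodule F ((Fin n → F) → F) :=
    Submodule.span F (Set.range fun x => s (α x)) with hSdef
  -- the "precompose with β" linear map
  set M : ((Fin n → F) → F) →ₗ[F] ((Fin n → F) → F) :=
    { toFun := fun f => f ∘ β
      map_add' := fun f g => rfl
      map_smul' := fun c f => rfl } with hM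
  -- coefficients map
  set κ : (Fin n → F) →ₗ[F] ((Fin n → F) → F) :=
    { toFun := fun c y => ∑ i, y i * c i
      map_add' := by
        intro c c'
        funext y
        simp [mul_add, Finset.sum_add_distrib]
      map_smul' := by
        intro r c
        funext y
        simp [Finset.mul_sum]
        apply Finset.sum_congr rfl
        intro i _
        ring } with hκ
  have hsκ : ∀ v, s v = κ (fun i => MvPolynomial.eval v (MvPolynomial.pderiv i P)) := by
    intro v; rfl
  have hS0le : S0 ≤ LinearMap.range κ := by
    rw [hS0, Submodule.span_le]
    rintro _ ⟨v, rfl⟩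
    exact ⟨_, (hsκ v).symm⟩
  haveI hfinrange : FiniteDimensional F (LinearMap.range κ) := inferInstance
  haveI hS0fd : FiniteDimensional F S0 := Submodule.finiteDimensional_of_le hS0le
  have hSle : S ≤ S0 := by
    apply Submodule.span_mono
    rintro _ ⟨x, rfl⟩
    exact ⟨α x, rfl⟩
  haveI hSfd : FiniteDimensional F S := Submodule.finiteDimensional_of_le hSle
  have hmap : S0 ≤ Submodule.map M S := by
    rw [hS0, Submodule.span_le]
    rintro _ ⟨v, rfl⟩
    refine ⟨s (α v), Submodule.subset_span ⟨v, rfl⟩, ?_⟩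
    funext y
    exact (hid v y).symm
  have hfr : Module.finrank F S0 ≤ Module.finrank F S := by
    haveI : FiniteDimensional F (Submodule.map M S) := Module.Finite.map S M
    exact le_trans (Submodule.finrank_mono hmap) (Submodule.finrank_map_le M S)
  have hEq : S = S0 := Submodule.eq_of_le_of_finrank_le hSle hfr
  -- evaluation at w
  have hker : S0 ≤ LinearMap.ker (LinearMap.proj (R := F) (φ := fun _ : Fin n → F => F) w) := by
    rw [← hEq, hSdef, Submodule.span_le]
    rintro _ ⟨x, rfl⟩
    simp only [SetLike.mem_coe, LinearMap.mem_ker, LinearMap.proj_apply]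
    exact hw x
  have hv : s v ∈ S0 := Submodule.subset_span ⟨v, rfl⟩
  have := hker hv
  simpa using this

end Stmt11Aux

open Stmt11Aux

theorem stmt_11 {F : Type*} [Field F] [CharZero F] {n : ℕ}
    (P : MvPolynomial (Fin n) F) (d : ℕ) (hhom : P.IsHomogeneous d)
    (phi psi : (Fin n → F) → (Fin n → F))
    (h : ∀ (x y : Fin n → F) (lam : F),
      MvPolynomial.eval (x + lam • y) P = MvPolynomial.eval (phi x + lam • psi y) P)
    (Prad : ((Fin n → F) ⧸ funRadical (fun x : Fin n → F => MvPolynomial.eval x P)) → F)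
    (hPrad : ∀ v : Fin n → F,
      MvPolynomial.eval v P = Prad (Submodule.Quotient.mk v)) :
    ∃! T : ((Fin n → F) ⧸ funRadical (fun x : Fin n → F => MvPolynomial.eval x P)) →ₗ[F]
        ((Fin n → F) ⧸ funRadical (fun x : Fin n → F => MvPolynomial.eval x P)),
      (∀ z, Prad (T z) = Prad z) ∧
      (∀ v : Fin n → F,
        Submodule.Quotient.mk (phi v) = T (Submodule.Quotient.mk v)) ∧
      (∀ v : Fin n → F,
        Submodule.Quotient.mk (psi v) = T (Submodule.Quotient.mk v)) := by
  classical
  have hP0 : ∀ x, MvPolynomial.eval (phi x) P = MvPolynomial.eval x P := by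
    intro x
    have := h x x 0
    simpa using this.symm
  have hswap : ∀ (x y : Fin n → F) (mu : F),
      MvPolynomial.eval (psi x + mu • phi y) P = MvPolynomial.eval (x + mu • y) P := by
    intro x y mu
    have hpoly : lineP P (psi x) (phi y) = lineP P x y := by
      apply Polynomial.eq_of_infinite_eval_eq
      apply Set.Infinite.mono (s := {t : F | t ≠ 0})
      · intro t ht
        simp only [Set.mem_setOf_eq] at ht ⊢
        rw [eval_lineP, eval_lineP]
        have h1 : psi x + t • phi y = t • (phi y + t⁻¹ • psi x) := by
          rw [smul_add, smul_smul, mul_inv_cancel₀ ht, one_smul, add_comm]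
        have h2 : x + t • y = t • (y + t⁻¹ • x) := by
          rw [smul_add, smul_smul, mul_inv_cancel₀ ht, one_smul, add_comm]
        rw [h1, h2, eval_smul_of_isHomogeneous P hhom, eval_smul_of_isHomogeneous P hhom,
          ← h y x t⁻¹]
      · have : ({t : F | t ≠ 0} : Set F) = ({0} : Set F)ᶜ := by
          ext t; simp
        rw [this]
        exact Set.Finite.infinite_compl (Set.finite_singleton 0)
    have := eval_lineP P (psi x) (phi y) mu
    rw [hpoly, eval_lineP] at this
    exact this.symm
  have hN2 : ∀ x y, Dop P x y = Dop P (phi x) (psi y) := by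
    intro x y
    exact Dop_congr (fun t => h x y t)
  have hN3 : ∀ x y, Dop P x y = Dop P (psi x) (phi y) := by
    intro x y
    exact Dop_congr (fun t => (hswap x y t).symm)
  have hmem_psi : ∀ w : Fin n → F, (∀ y, Dop P (psi y) w = 0) →
      w ∈ funRadical (fun x : Fin n → F => MvPolynomial.eval x P) := by
    intro w hw
    rw [mem_funRadical_iff_Dop]
    exact key_span P psi phi hN3 w hw
  have hmem_phi : ∀ w : Fin n → F, (∀ y, Dop P (phi y) w = 0) →
      w ∈ funRadical (fun x : Fin n → F => MvPolynomial.eval x P) := by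
    intro w hw
    rw [mem_funRadical_iff_Dop]
    exact key_span P phi psi hN2 w hw
  have hradD : ∀ w : Fin n → F,
      w ∈ funRadical (fun x : Fin n → F => MvPolynomial.eval x P) →
      ∀ v, Dop P v w = 0 := by
    intro w hw
    rw [mem_funRadical_iff_Dop] at hw
    exact hw
  have feq : ∀ u u' : Fin n → F,
      (Submodule.Quotient.mk u :
        (Fin n → F) ⧸ funRadical (fun x : Fin n → F => MvPolynomial.eval x P))
        = Submodule.Quotient.mk u' →
      MvPolynomial.eval u P = MvPolynomial.eval u' P := by
    intro u u' huu
    rw [hPrad u, hPrad u']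
    exact congrArg Prad huu
  have hphi_lin_add : ∀ a b : Fin n → F,
      (Submodule.Quotient.mk (phi (a + b)) :
        (Fin n → F) ⧸ funRadical (fun x : Fin n → F => MvPolynomial.eval x P))
        = Submodule.Quotient.mk (phi a) + Submodule.Quotient.mk (phi b) := by
    intro a b
    rw [← Submodule.Quotient.mk_add, Submodule.Quotient.eq]
    apply hmem_psi
    intro y
    rw [Dop_sub, Dop_add, ← hN3, ← hN3, ← hN3, ← Dop_add, ← Dop_sub]
    rw [show a + b - (a + b) = 0 by abel, Dop_zero]
  have hphi_lin_smul : ∀ (c : F) (a : Fin n → F),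
      (Submodule.Quotient.mk (phi (c • a)) :
        (Fin n → F) ⧸ funRadical (fun x : Fin n → F => MvPolynomial.eval x P))
        = c • Submodule.Quotient.mk (phi a) := by
    intro c a
    rw [← Submodule.Quotient.mk_smul, Submodule.Quotient.eq]
    apply hmem_psi
    intro y
    rw [Dop_sub, Dop_smul, ← hN3, ← hN3, ← Dop_smul, ← Dop_sub]
    rw [show c • a - c • a = 0 by abel, Dop_zero]
  have hpsi_lin_add : ∀ a b : Fin n → F,
      (Submodule.Quotient.mk (psi (a + b)) :
        (Fin n → F) ⧸ funRadical (fun x : Fin n → F => MvPolynomial.eval x P))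
        = Submodule.Quotient.mk (psi a) + Submodule.Quotient.mk (psi b) := by
    intro a b
    rw [← Submodule.Quotient.mk_add, Submodule.Quotient.eq]
    apply hmem_phi
    intro y
    rw [Dop_sub, Dop_add, ← hN2, ← hN2, ← hN2, ← Dop_add, ← Dop_sub]
    rw [show a + b - (a + b) = 0 by abel, Dop_zero]
  have hpsi_lin_smul : ∀ (c : F) (a : Fin n → F),
      (Submodule.Quotient.mk (psi (c • a)) :
        (Fin n → F) ⧸ funRadical (fun x : Fin n → F => MvPolynomial.eval x P))
        = c • Submodule.Quotient.mk (psi a) := by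
    intro c a
    rw [← Submodule.Quotient.mk_smul, Submodule.Quotient.eq]
    apply hmem_phi
    intro y
    rw [Dop_sub, Dop_smul, ← hN2, ← hN2, ← Dop_smul, ← Dop_sub]
    rw [show c • a - c • a = 0 by abel, Dop_zero]
  set g : (Fin n → F) →ₗ[F]
      ((Fin n → F) ⧸ funRadical (fun x : Fin n → F => MvPolynomial.eval x P)) :=
    { toFun := fun v => Submodule.Quotient.mk (phi v)
      map_add' := hphi_lin_add
      map_smul' := hphi_lin_smul } with hg
  have hker_phi : funRadical (fun x : Fin n → F => MvPolynomial.eval x P)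
      ≤ LinearMap.ker g := by
    intro w hw
    rw [LinearMap.mem_ker]
    show (Submodule.Quotient.mk (phi w) :
      (Fin n → F) ⧸ funRadical (fun x : Fin n → F => MvPolynomial.eval x P)) = 0
    rw [Submodule.Quotient.mk_eq_zero]
    apply hmem_psi
    intro y
    rw [← hN3]
    exact hradD w hw y
  set T : ((Fin n → F) ⧸ funRadical (fun x : Fin n → F => MvPolynomial.eval x P)) →ₗ[F]
      ((Fin n → F) ⧸ funRadical (fun x : Fin n → F => MvPolynomial.eval x P)) :=
    Submodule.liftQ _ g hker_phi with hT
  have hTmk : ∀ v : Fin n → F, T (Submodule.Quotient.mk v) = Submodule.Quotient.mk (phi v) := by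
    intro v
    rw [hT]
    exact Submodule.liftQ_apply _ g v
  have hTinj : Function.Injective T := by
    rw [← LinearMap.ker_eq_bot]
    rw [Submodule.eq_bot_iff]
    intro x hx
    obtain ⟨v, rfl⟩ := Submodule.Quotient.mk_surjective _ x
    rw [LinearMap.mem_ker] at hx
    have hx' : (Submodule.Quotient.mk (phi v) :
        (Fin n → F) ⧸ funRadical (fun x : Fin n → F => MvPolynomial.eval x P)) = 0 := by
      rw [← hTmk v]; exact hx
    have hphiv : phi v ∈ funRadical (fun x : Fin n → F => MvPolynomial.eval x P) := by
      rwa [Submodule.Quotient.mk_eq_zero] at hx'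
    have hv : v ∈ funRadical (fun x : Fin n → F => MvPolynomial.eval x P) := by
      rw [mem_funRadical_iff_Dop]
      intro z
      rw [hN3 z v]
      exact hradD _ hphiv _
    rwa [Submodule.Quotient.mk_eq_zero]
  have hTsurj : Function.Surjective T := LinearMap.injective_iff_surjective.mp hTinj
  have hphipsi : ∀ a : Fin n → F,
      psi a - phi a ∈ funRadical (fun x : Fin n → F => MvPolynomial.eval x P) := by
    intro a
    rw [mem_funRadical]
    intro v lam
    obtain ⟨zb, hz⟩ := hTsurj (Submodule.Quotient.mk v)
    obtain ⟨z, rfl⟩ := Submodule.Quotient.mk_surjective _ zb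
    have hzv : (Submodule.Quotient.mk (phi z) :
        (Fin n → F) ⧸ funRadical (fun x : Fin n → F => MvPolynomial.eval x P))
        = Submodule.Quotient.mk v := by
      rw [← hTmk z]; exact hz
    have h1 : (Submodule.Quotient.mk (phi (z - lam • a)) :
        (Fin n → F) ⧸ funRadical (fun x : Fin n → F => MvPolynomial.eval x P))
        = Submodule.Quotient.mk (phi z) - lam • Submodule.Quotient.mk (phi a) := by
      have h2 := map_sub g z (lam • a)
      have h3 := map_smul g lam a
      show g (z - lam • a) = _
      rw [h2, h3]
      rfl
    have hclass : (Submodule.Quotient.mk (v + lam • (psi a - phi a)) :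
        (Fin n → F) ⧸ funRadical (fun x : Fin n → F => MvPolynomial.eval x P))
        = Submodule.Quotient.mk (phi (z - lam • a) + lam • psi a) := by
      rw [Submodule.Quotient.mk_add, Submodule.Quotient.mk_add,
        Submodule.Quotient.mk_smul, Submodule.Quotient.mk_smul,
        Submodule.Quotient.mk_sub, h1, hzv]
      module
    show MvPolynomial.eval (v + lam • (psi a - phi a)) P = MvPolynomial.eval v P
    calc MvPolynomial.eval (v + lam • (psi a - phi a)) P
        = MvPolynomial.eval (phi (z - lam • a) + lam • psi a) P := feq _ _ hclass
      _ = MvPolynomial.eval ((z - lam • a) + lam • a) P := (h (z - lam • a) a lam).symm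
      _ = MvPolynomial.eval z P := by rw [sub_add_cancel]
      _ = MvPolynomial.eval (phi z) P := (hP0 z).symm
      _ = MvPolynomial.eval v P := feq _ _ hzv
  refine ⟨T, ⟨?_, ?_, ?_⟩, ?_⟩
  · intro z
    obtain ⟨v, rfl⟩ := Submodule.Quotient.mk_surjective _ z
    rw [hTmk v, ← hPrad (phi v), ← hPrad v, hP0]
  · intro v
    exact (hTmk v).symm
  · intro v
    have hmk : (Submodule.Quotient.mk (psi v) :
        (Fin n → F) ⧸ funRadical (fun x : Fin n → F => MvPolynomial.eval x P))
        = Submodule.Quotient.mk (phi v) := by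
      rw [Submodule.Quotient.eq]
      exact hphipsi v
    rw [hmk]
    exact (hTmk v).symm
  · intro T' hT'
    apply Submodule.linearMap_qext
    apply LinearMap.ext
    intro v
    simp only [LinearMap.comp_apply, Submodule.mkQ_apply]
    rw [← hT'.2.1 v]
    exact (hTmk v).symm

end
end

section
/- Let F be a field and let P ∈ F[x_1,…,x_n] be a homogeneous polynomial such that deg(P) < |F| and dim(L_P) + dim(rad(P)) = n. If φ : F^n → F^n is a map such that P(x + λy) = P(φ(x) + λφ(y)) for all x, y ∈ F^n and λ ∈ F, then there exists a unique linear map T_rad : F^n/rad(P) → F^n/rad(P) preserving P_rad (i.e., P_rad ∘ T_rad = P_rad) such that π_rad ∘ φ = T_rad ∘ π_rad. -/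
open scoped Classical

noncomputable section

namespace Stmt12Aux

open Polynomial

variable {F : Type*} [Field F] {n : ℕ}

def Qp (P : MvPolynomial (Fin n) F) (a b : Fin n → F) : Polynomial F :=
  (MvPolynomial.aeval (fun i => Polynomial.C (a i) + Polynomial.C (b i) * Polynomial.X)) P

lemma dirDeriv_eq_coeff (P : MvPolynomial (Fin n) F) (a b : Fin n → F) :
    dirDeriv P a b = (Qp P a b).coeff 1 := rfl

lemma Qp_eval (P : MvPolynomial (Fin n) F) (a b : Fin n → F) (lam : F) :
    (Qp P a b).eval lam = MvPolynomial.eval (a + lam • b) P := by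
  have : (Polynomial.aeval lam).comp
      (MvPolynomial.aeval (R := F) (fun i => Polynomial.C (a i) + Polynomial.C (b i) * Polynomial.X))
      = MvPolynomial.aeval (fun i => a i + lam * b i) := by
    apply MvPolynomial.algHom_ext
    intro i
    simp
    ring
  have h2 := congrArg (fun f => f P) this
  simp only [AlgHom.comp_apply] at h2
  rw [Qp, ← Polynomial.coe_aeval_eq_eval, h2]
  rw [MvPolynomial.aeval_def, MvPolynomial.eval, Algebra.algebraMap_self]
  rfl

lemma Qp_natDegree_le (P : MvPolynomial (Fin n) F) (a b : Fin n → F) :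
    (Qp P a b).natDegree ≤ P.totalDegree := by
  rw [Qp, MvPolynomial.aeval_def, MvPolynomial.eval₂_eq]
  apply Polynomial.natDegree_sum_le_of_forall_le
  intro d hd
  apply le_trans (Polynomial.natDegree_mul_le)
  rw [Polynomial.algebraMap_eq, natDegree_C, zero_add]
  refine le_trans (Polynomial.natDegree_prod_le _ _) ?_
  refine le_trans (Finset.sum_le_sum (fun i _ => ?_)) (MvPolynomial.le_totalDegree hd)
  refine le_trans (Polynomial.natDegree_pow_le) ?_
  have h1 : (C (a i) + C (b i) * X).natDegree ≤ 1 := by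
    refine le_trans (Polynomial.natDegree_add_le _ _) ?_
    simp only [natDegree_C, max_le_iff]
    exact ⟨Nat.zero_le _, le_trans (Polynomial.natDegree_C_mul_le _ _) (by simp)⟩
  calc d i * (C (a i) + C (b i) * X).natDegree ≤ d i * 1 := Nat.mul_le_mul_left _ h1
    _ = d i := Nat.mul_one _

lemma coeff_one_mul' (f g : Polynomial F) :
    (f * g).coeff 1 = f.coeff 0 * g.coeff 1 + f.coeff 1 * g.coeff 0 := by
  rw [Polynomial.coeff_mul]
  have : Finset.HasAntidiagonal.antidiagonal (1:ℕ) = {(0,1),(1,0)} := by decide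
  rw [this, Finset.sum_insert (by decide), Finset.sum_singleton]

lemma Qp_coeff_zero (P : MvPolynomial (Fin n) F) (a b : Fin n → F) :
    (Qp P a b).coeff 0 = MvPolynomial.eval a P := by
  have h := Qp_eval P a b 0
  rw [Polynomial.coeff_zero_eq_eval_zero, h]
  simp

lemma Qp_linear (P : MvPolynomial (Fin n) F) (a : Fin n → F) (y z : Fin n → F) (c : F) :
    (Qp P a (y + c • z)).coeff 1 = (Qp P a y).coeff 1 + c * (Qp P a z).coeff 1 := by
  induction P using MvPolynomial.induction_on with
  | C r => simp [Qp]
  | add p q hp hq => simp only [Qp, map_add, Polynomial.coeff_add] at *; rw [hp, hq]; ring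
  | mul_X p i hp =>
    have key : ∀ b : Fin n → F, (Qp (p * MvPolynomial.X i) a b).coeff 1
        = MvPolynomial.eval a p * b i + (Qp p a b).coeff 1 * a i := by
      intro b
      have : Qp (p * MvPolynomial.X i) a b = Qp p a b * (C (a i) + C (b i) * X) := by
        simp [Qp]
      rw [this, coeff_one_mul', Qp_coeff_zero]
      simp
    rw [key, key, key, hp]
    simp only [Pi.add_apply, Pi.smul_apply, smul_eq_mul]
    ring

lemma dirDeriv_lin (P : MvPolynomial (Fin n) F) (a : Fin n → F) (y z : Fin n → F) (c : F) :
    dirDeriv P a (y + c • z) = dirDeriv P a y + c * dirDeriv P a z := Qp_linear P a y z c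

lemma dirDeriv_zero (P : MvPolynomial (Fin n) F) (a : Fin n → F) :
    dirDeriv P a 0 = 0 := by
  have h1 := dirDeriv_lin P a 0 0 1
  simp only [one_smul, add_zero, zero_add, one_mul] at h1
  have h2 : dirDeriv P a 0 + dirDeriv P a 0 = dirDeriv P a 0 + 0 := by
    rw [add_zero]; exact h1.symm
  exact (add_left_cancel h2)

/-- `dirDeriv P a` as a linear functional. -/
def ell (P : MvPolynomial (Fin n) F) (a : Fin n → F) : (Fin n → F) →ₗ[F] F where
  toFun := fun v => dirDeriv P a v
  map_add' := fun y z => by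
    have := dirDeriv_lin P a y z 1
    simpa using this
  map_smul' := fun c y => by
    have := dirDeriv_lin P a 0 y c
    simpa [dirDeriv_zero] using this

lemma mem_coann_span_range_iff {α : Type*} (g : α → Module.Dual F (Fin n → F))
    (v : Fin n → F) :
    v ∈ (Submodule.span F (Set.range g)).dualCoannihilator ↔ ∀ a, g a v = 0 := by
  rw [Submodule.mem_dualCoannihilator]
  constructor
  · intro H a
    exact H (g a) (Submodule.subset_span (Set.mem_range_self a))
  · intro H f hf
    induction hf using Submodule.span_induction with
    | mem f hf => obtain ⟨a, rfl⟩ := hf; exact H a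
    | zero => simp
    | add f g _ _ hf hg => simp [LinearMap.add_apply, hf, hg]
    | smul c f _ hf => simp [LinearMap.smul_apply, hf]

end Stmt12Aux

theorem stmt_12 {F : Type*} [Field F] {n : ℕ}
    (P : MvPolynomial (Fin n) F) (d : ℕ) (hhom : P.IsHomogeneous d)
    (hdeg : (P.totalDegree : Cardinal) < Cardinal.mk F)
    (hdim : Module.rank F ↥(polyLP P)
      + Module.rank F ↥(funRadical (fun x : Fin n → F => MvPolynomial.eval x P))
      = (n : Cardinal))
    (phi : (Fin n → F) → (Fin n → F))
    (h : ∀ (x y : Fin n → F) (lam : F),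
      MvPolynomial.eval (x + lam • y) P = MvPolynomial.eval (phi x + lam • phi y) P)
    (Prad : ((Fin n → F) ⧸ funRadical (fun x : Fin n → F => MvPolynomial.eval x P)) → F)
    (hPrad : ∀ v : Fin n → F,
      MvPolynomial.eval v P = Prad (Submodule.Quotient.mk v)) :
    ∃! T : ((Fin n → F) ⧸ funRadical (fun x : Fin n → F => MvPolynomial.eval x P)) →ₗ[F]
        ((Fin n → F) ⧸ funRadical (fun x : Fin n → F => MvPolynomial.eval x P)),
      (∀ z, Prad (T z) = Prad z) ∧
      (∀ v : Fin n → F,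
        Submodule.Quotient.mk (phi v) = T (Submodule.Quotient.mk v)) := by
  classical
  open Stmt12Aux in
  let V := (Fin n → F)
  -- value preservation
  have hPphi : ∀ v : V, MvPolynomial.eval v P = MvPolynomial.eval (phi v) P := by
    intro v
    have := h v v 0
    simpa using this
  -- the key polynomial identity
  have hQ : ∀ x y : V, Qp P x y = Qp P (phi x) (phi y) := by
    intro x y
    have hz : Qp P x y - Qp P (phi x) (phi y) = 0 := by
      apply Polynomial.eq_zero_of_forall_eval_zero_of_natDegree_lt_card
      · intro r
        simp only [Polynomial.eval_sub, Qp_eval]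
        rw [h x y r, sub_self]
      · calc ((Qp P x y - Qp P (phi x) (phi y)).natDegree : Cardinal)
            ≤ (P.totalDegree : Cardinal) := by
              refine Nat.cast_le.mpr (le_trans (Polynomial.natDegree_sub_le _ _) ?_)
              exact max_le (Qp_natDegree_le P x y) (Qp_natDegree_le P (phi x) (phi y))
          _ < Cardinal.mk F := hdeg
    exact sub_eq_zero.mp hz
  have hdd : ∀ x y : V, dirDeriv P (phi x) (phi y) = dirDeriv P x y := by
    intro x y
    rw [dirDeriv_eq_coeff, dirDeriv_eq_coeff, ← hQ]
  -- submodules K and N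
  let K := (Submodule.span F (Set.range (ell P))).dualCoannihilator
  let N := (Submodule.span F
      (Set.range (fun u : V => ell P (phi u)))).dualCoannihilator
  have memK : ∀ v : V, v ∈ K ↔ ∀ a, dirDeriv P a v = 0 := fun v =>
    mem_coann_span_range_iff (ell P) v
  have memN : ∀ v : V, v ∈ N ↔ ∀ u, dirDeriv P (phi u) v = 0 := fun v =>
    mem_coann_span_range_iff (fun u : V => ell P (phi u)) v
  -- rad ≤ K
  have hradK : funRadical (fun x : Fin n → F => MvPolynomial.eval x P) ≤ K := by
    intro w hw
    rw [memK]
    intro a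
    have hz : Qp P a w - Polynomial.C (MvPolynomial.eval a P) = 0 := by
      apply Polynomial.eq_zero_of_forall_eval_zero_of_natDegree_lt_card
      · intro r
        have hw' : ∀ (v : Fin n → F) (lam : F),
            MvPolynomial.eval (v + lam • w) P = MvPolynomial.eval v P := hw
        simp only [Polynomial.eval_sub, Qp_eval, Polynomial.eval_C]
        rw [hw' a r, sub_self]
      · calc ((Qp P a w - Polynomial.C (MvPolynomial.eval a P)).natDegree : Cardinal)
            ≤ (P.totalDegree : Cardinal) := by
              refine Nat.cast_le.mpr (le_trans (Polynomial.natDegree_sub_le _ _) ?_)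
              exact max_le (Qp_natDegree_le P a w) (by simp)
          _ < Cardinal.mk F := hdeg
    have := congrArg (fun q => Polynomial.coeff q 1) hz
    simp only [Polynomial.coeff_sub, Polynomial.coeff_C, Polynomial.coeff_zero] at this
    rw [dirDeriv_eq_coeff]
    simpa using this
  have hKN : K ≤ N := by
    intro v hv
    rw [memK] at hv
    rw [memN]
    intro u
    exact hv (phi u)
  -- the linear map into V ⧸ N
  have hlinN : ∀ (x y : V) (c : F), phi (x + c • y) - (phi x + c • phi y) ∈ N := by
    intro x y c
    rw [memN]
    intro u
    have e1 : dirDeriv P (phi u) (phi (x + c • y) - (phi x + c • phi y))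
        = dirDeriv P (phi u) (phi (x + c • y)) - (dirDeriv P (phi u) (phi x)
          + c * dirDeriv P (phi u) (phi y)) := by
      have := map_sub (ell P (phi u)) (phi (x + c • y)) (phi x + c • phi y)
      have h2 := map_add (ell P (phi u)) (phi x) (c • phi y)
      have h3 := map_smul (ell P (phi u)) c (phi y)
      simp only [ell, LinearMap.coe_mk, AddHom.coe_mk, smul_eq_mul] at this h2 h3
      rw [this, h2, h3]
    rw [e1, hdd u (x + c • y), hdd u x, hdd u y, dirDeriv_lin, sub_self]
  let psi : V →ₗ[F] (V ⧸ N) :=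
    { toFun := fun z => Submodule.Quotient.mk (phi z)
      map_add' := by
        intro x y
        rw [← Submodule.Quotient.mk_add, Submodule.Quotient.eq]
        have := hlinN x y 1
        simpa using this
      map_smul' := by
        intro c y
        simp only [RingHom.id_apply]
        rw [← Submodule.Quotient.mk_smul, Submodule.Quotient.eq]
        have h1 := hlinN 0 y c
        rw [zero_add] at h1
        have h0 : phi 0 ∈ N := by
          rw [memN]; intro u
          rw [hdd u 0, dirDeriv_zero]
        have : phi (c • y) - c • phi y = (phi (c • y) - (phi 0 + c • phi y)) + phi 0 := by
          abel
        rw [this]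
        exact N.add_mem h1 h0 }
  have hker : LinearMap.ker psi = K := by
    ext z
    rw [LinearMap.mem_ker]
    show Submodule.Quotient.mk (phi z) = 0 ↔ z ∈ K
    rw [Submodule.Quotient.mk_eq_zero, memN, memK]
    constructor
    · intro H a'
      rw [← hdd a' z]
      exact H a'
    · intro H u
      rw [hdd u z]; exact H u
  -- finrank bookkeeping
  have fV : Module.finrank F (Fin n → F) = n := Module.finrank_fin_fun F
  have hfq : Module.finrank F ((Fin n → F) ⧸ K) ≤ Module.finrank F ((Fin n → F) ⧸ N) := by
    have e1 : Module.finrank F ((Fin n → F) ⧸ K)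
        = Module.finrank F (LinearMap.range psi) := by
      rw [← hker]
      exact (LinearMap.quotKerEquivRange psi).finrank_eq
    rw [e1]
    exact Submodule.finrank_le _
  have hq1 := Submodule.finrank_quotient_add_finrank K
  have hq2 := Submodule.finrank_quotient_add_finrank N
  have hfKN : Module.finrank F K ≤ Module.finrank F N := Submodule.finrank_mono hKN
  have hKeqN : K = N := Submodule.eq_of_le_of_finrank_eq hKN (by rw [fV] at hq1 hq2; omega)
  -- rad = K via dimension count
  let LPd : Submodule F (Module.Dual F (Fin n → F)) := Submodule.span F (Set.range (ell P))
  let coeLM : (Module.Dual F (Fin n → F)) →ₗ[F] ((Fin n → F) → F) :=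
    { toFun := fun f => ⇑f, map_add' := fun f g => rfl, map_smul' := fun c f => rfl }
  have hinj : Function.Injective coeLM := fun f g hfg => LinearMap.ext (congrFun hfg)
  have hmap : polyLP P = LPd.map coeLM := by
    rw [polyLP, Submodule.map_span]
    congr 1
    rw [← Set.range_comp]
    rfl
  let e2 : LPd ≃ₗ[F] (LPd.map coeLM) := Submodule.equivMapOfInjective coeLM hinj LPd
  haveI hfd : FiniteDimensional F ↥(polyLP P) := by
    rw [hmap]; exact Module.Finite.equiv e2
  have hfr : Module.finrank F ↥(polyLP P) = Module.finrank F ↥LPd := by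
    have : Module.finrank F ↥LPd = Module.finrank F ↥(LPd.map coeLM) := e2.finrank_eq
    rw [hmap, this]
  have hrank1 : Module.rank F ↥(polyLP P) = (Module.finrank F ↥LPd : Cardinal) := by
    rw [← hfr, Module.finrank_eq_rank]
  have hrank2 : Module.rank F ↥(funRadical (fun x : Fin n → F => MvPolynomial.eval x P))
      = (Module.finrank F ↥(funRadical (fun x : Fin n → F => MvPolynomial.eval x P)) : Cardinal) :=
    (Module.finrank_eq_rank F _).symm
  have hnat : Module.finrank F ↥LPd
      + Module.finrank F ↥(funRadical (fun x : Fin n → F => MvPolynomial.eval x P)) = n := by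
    rw [hrank1, hrank2] at hdim
    exact_mod_cast hdim
  have hdual : Module.finrank F ↥LPd + Module.finrank F ↥K = Module.finrank F (Fin n → F) :=
    Subspace.finrank_add_finrank_dualCoannihilator_eq LPd
  have hradfr : Module.finrank F ↥(funRadical (fun x : Fin n → F => MvPolynomial.eval x P))
      = Module.finrank F ↥K := by rw [fV] at hdual; omega
  have hradK' : funRadical (fun x : Fin n → F => MvPolynomial.eval x P) = K :=
    Submodule.eq_of_le_of_finrank_eq hradK hradfr
  have hradN : funRadical (fun x : Fin n → F => MvPolynomial.eval x P) = N :=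
    hradK'.trans hKeqN
  -- the final linear map
  let psi' : (Fin n → F) →ₗ[F]
      ((Fin n → F) ⧸ funRadical (fun x : Fin n → F => MvPolynomial.eval x P)) :=
    { toFun := fun z => Submodule.Quotient.mk (phi z)
      map_add' := by
        intro x y
        rw [← Submodule.Quotient.mk_add, Submodule.Quotient.eq, hradN]
        have := hlinN x y 1
        simpa using this
      map_smul' := by
        intro c y
        simp only [RingHom.id_apply]
        rw [← Submodule.Quotient.mk_smul, Submodule.Quotient.eq, hradN]
        have h1 := hlinN 0 y c
        rw [zero_add] at h1
        have h0 : phi 0 ∈ N := by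
          rw [memN]; intro u
          rw [hdd u 0, dirDeriv_zero]
        have heq : phi (c • y) - c • phi y = (phi (c • y) - (phi 0 + c • phi y)) + phi 0 := by
          abel
        rw [heq]
        exact N.add_mem h1 h0 }
  have hle : funRadical (fun x : Fin n → F => MvPolynomial.eval x P) ≤ LinearMap.ker psi' := by
    intro z hz
    rw [LinearMap.mem_ker]
    show Submodule.Quotient.mk (phi z) = 0
    rw [Submodule.Quotient.mk_eq_zero, hradN, memN]
    intro u
    rw [hdd u z]
    exact (memK z).mp (hradK hz) u
  refine ⟨Submodule.liftQ _ psi' hle, ⟨?_, ?_⟩, ?_⟩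
  · intro z
    obtain ⟨v, rfl⟩ := Submodule.Quotient.mk_surjective _ z
    have hT : (Submodule.liftQ _ psi' hle) (Submodule.Quotient.mk v)
        = Submodule.Quotient.mk (phi v) := rfl
    rw [hT, ← hPrad (phi v), ← hPphi v, hPrad v]
  · intro v
    rfl
  · rintro T' ⟨h1, h2⟩
    apply LinearMap.ext
    intro z
    obtain ⟨v, rfl⟩ := Submodule.Quotient.mk_surjective _ z
    rw [← h2 v]
    rfl

end
end
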